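/- arXiv:2112.03852 — 7 statements merged into one kernel-verified Lean document; each statement's English description precedes it below -/
import Mathlib

section
/- Every Hilbert–Schmidt operator on a separable Hilbert space H factors through ℓ¹: if f ∈ S₂(H), then there exist bounded operators g : H → ℓ¹ and h : ℓ¹ → H with f = h ∘ g. -/
set_option maxHeartbeats 1000000

noncomputable def approxNum {H : Type} [NormedAddCommGroup H]
    [InnerProductSpace ℂ H] [CompleteSpace H] (f : H →L[ℂ] H) (n : ℕ) : ℝ :=
  sInf {r : ℝ | ∃ g : H →L[ℂ] H,
    Module.rank ℂ (LinearMap.range (g : H →ₗ[ℂ] H)) ≤ n ∧ r = ‖f - g‖}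

open scoped ComplexConjugate ENNReal

local notation "⟪" x ", " y "⟫" => @inner ℂ _ _ x y

section Core
variable {H : Type} [NormedAddCommGroup H] [InnerProductSpace ℂ H] [CompleteSpace H]

lemma approxNum_set_nonempty (f : H →L[ℂ] H) (n : ℕ) :
    Set.Nonempty {r : ℝ | ∃ g : H →L[ℂ] H,
      Module.rank ℂ (LinearMap.range (g : H →ₗ[ℂ] H)) ≤ n ∧ r = ‖f - g‖} := by
  refine ⟨‖f - 0‖, 0, ?_, rfl⟩
  simp

lemma approxNum_nonneg (f : H →L[ℂ] H) (n : ℕ) : 0 ≤ approxNum f n := by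
  refine le_csInf (approxNum_set_nonempty f n) ?_
  rintro r ⟨g, -, rfl⟩
  exact norm_nonneg _

lemma le_approxNum {f : H →L[ℂ] H} {n : ℕ} {c : ℝ}
    (h : ∀ g : H →L[ℂ] H,
      Module.rank ℂ (LinearMap.range (g : H →ₗ[ℂ] H)) ≤ n → c ≤ ‖f - g‖) :
    c ≤ approxNum f n := by
  refine le_csInf (approxNum_set_nonempty f n) ?_
  rintro r ⟨g, hg, rfl⟩
  exact h g hg

lemma key_fin (f : H →L[ℂ] H) {N : ℕ} {w : Fin N → H} (hwo : Orthonormal ℂ w) :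
    ∑ k : Fin N, ‖f (w k)‖ ^ 2 ≤ ∑ n ∈ Finset.range N, approxNum f n ^ 2 := by
  classical
  set V : Submodule ℂ H := Submodule.span ℂ (Set.range w) with hV
  haveI hVfin : FiniteDimensional ℂ V :=
    FiniteDimensional.span_of_finite ℂ (Set.finite_range w)
  have hVrank : Module.finrank ℂ V = N := by
    rw [finrank_span_eq_card hwo.linearIndependent, Fintype.card_fin]
  haveI : CompleteSpace V := FiniteDimensional.complete ℂ V
  set T : V →ₗ[ℂ] V :=
    (((V.orthogonalProjectionOnto).comp
      (((ContinuousLinearMap.adjoint f).comp f).comp V.subtypeL)) :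
        V →L[ℂ] V).toLinearMap with hT
  have hTinner : ∀ x y : V, ⟪T x, y⟫ = ⟪f (x : H), f (y : H)⟫ := by
    intro x y
    show ⟪V.orthogonalProjectionOnto ((ContinuousLinearMap.adjoint f) (f (x : H))), y⟫ = _
    rw [Submodule.inner_orthogonalProjectionOnto_eq_of_mem_right,
      ContinuousLinearMap.adjoint_inner_left]
  have hTsym : T.IsSymmetric := by
    intro x y
    calc ⟪T x, y⟫ = ⟪f (x : H), f (y : H)⟫ := hTinner x y
      _ = conj ⟪f (y : H), f (x : H)⟫ := (inner_conj_symm _ _).symm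
      _ = conj ⟪T y, x⟫ := by rw [hTinner y x]
      _ = ⟪x, T y⟫ := inner_conj_symm _ _
  set μ := hTsym.eigenvalues hVrank with hμdef
  set v := hTsym.eigenvectorBasis hVrank with hvdef
  have hTv : ∀ j, T (v j) = (μ j : ℂ) • v j := fun j =>
    hTsym.apply_eigenvectorBasis hVrank j
  -- Parseval for any orthonormal basis of V
  have parseval : ∀ (c : OrthonormalBasis (Fin N) ℂ V) (x : V),
      ∑ k, ‖⟪c k, x⟫‖ ^ 2 = ‖x‖ ^ 2 := by
    intro c x
    have hpos : (0:ℝ) ≤ ∑ k, ‖(c.repr x) k‖ ^ 2 := by positivity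
    have h1 : Real.sqrt (∑ k, ‖(c.repr x) k‖ ^ 2) = ‖x‖ := by
      rw [← EuclideanSpace.norm_eq]
      exact c.repr.norm_map x
    have h2 : ∑ k, ‖(c.repr x) k‖ ^ 2 = ‖x‖ ^ 2 := by
      rw [← h1, Real.sq_sqrt hpos]
    calc ∑ k, ‖⟪c k, x⟫‖ ^ 2 = ∑ k, ‖(c.repr x) k‖ ^ 2 := by
          refine Finset.sum_congr rfl fun k _ => ?_
          rw [c.repr_apply_apply]
      _ = ‖x‖ ^ 2 := h2
  -- expansion of ‖f x‖² in eigencoordinates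
  have hexpand : ∀ x : V, ‖f (x : H)‖ ^ 2 = ∑ j, μ j * ‖⟪v j, x⟫‖ ^ 2 := by
    intro x
    have h1 : (‖f (x : H)‖ : ℂ) ^ 2 = ⟪T x, x⟫ := by
      rw [hTinner x x]
      exact (inner_self_eq_norm_sq_to_K (𝕜 := ℂ) (f (x : H))).symm
    have h2 : ⟪T x, x⟫ = ∑ j, ⟪T x, v j⟫ * ⟪v j, x⟫ :=
      (v.sum_inner_mul_inner (T x) x).symm
    have h3 : ∀ j, ⟪T x, v j⟫ * ⟪v j, x⟫ = ((μ j * ‖⟪v j, x⟫‖ ^ 2 : ℝ) : ℂ) := by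
      intro j
      have hz : conj (⟪v j, x⟫) * ⟪v j, x⟫ = ((‖⟪v j, x⟫‖ ^ 2 : ℝ) : ℂ) := by
        rw [mul_comm, Complex.mul_conj, Complex.normSq_eq_norm_sq]
      have hx : ⟪x, v j⟫ = conj ⟪v j, x⟫ := (inner_conj_symm _ _).symm
      rw [hTsym x (v j), hTv j, inner_smul_right, mul_assoc, hx, hz]
      push_cast
      ring_nf
    have h4 : (‖f (x : H)‖ : ℂ) ^ 2 = ((∑ j, μ j * ‖⟪v j, x⟫‖ ^ 2 : ℝ) : ℂ) := by
      rw [h1, h2, Finset.sum_congr rfl (fun j _ => h3 j)]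
      push_cast
      ring
    exact_mod_cast h4
  have hμnn : ∀ j, 0 ≤ μ j := by
    intro j
    have h1 : ⟪T (v j), v j⟫ = (μ j : ℂ) := by
      rw [hTv j, inner_smul_left]
      simp [inner_self_eq_norm_sq_to_K, v.orthonormal.1 j]
    have h2 : ⟪T (v j), v j⟫ = ((‖f ((v j : V) : H)‖ : ℂ)) ^ 2 := by
      rw [hTinner (v j) (v j)]
      exact inner_self_eq_norm_sq_to_K (𝕜 := ℂ) (f ((v j : V) : H))
    have : (μ j : ℂ) = ((‖f ((v j : V) : H)‖ ^ 2 : ℝ) : ℂ) := by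
      rw [← h1, h2]; push_cast; ring
    have := Complex.ofReal_injective this
    rw [this]; positivity
  -- orthonormal basis of V coming from w
  have hwmem : ∀ k, w k ∈ V := fun k => Submodule.subset_span (Set.mem_range_self k)
  set wV : Fin N → V := fun k => ⟨w k, hwmem k⟩ with hwV
  have hwVo : Orthonormal ℂ wV := by
    rw [orthonormal_iff_ite] at hwo ⊢
    intro i j
    rw [← hwo i j]
    rfl
  have hspan : ⊤ ≤ Submodule.span ℂ (Set.range wV) := by
    have h1 : Module.finrank ℂ (Submodule.span ℂ (Set.range wV)) = Module.finrank ℂ V := by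
      rw [finrank_span_eq_card hwVo.linearIndependent, Fintype.card_fin, hVrank]
    rw [Submodule.eq_top_of_finrank_eq h1]
  set b' : OrthonormalBasis (Fin N) ℂ V := OrthonormalBasis.mk hwVo hspan with hb'
  have hb'co : ∀ k, b' k = wV k := fun k => by rw [hb', OrthonormalBasis.coe_mk]
  have trace_eq : ∑ k : Fin N, ‖f (w k)‖ ^ 2 = ∑ j, μ j := by
    calc ∑ k : Fin N, ‖f (w k)‖ ^ 2 = ∑ k, ∑ j, μ j * ‖⟪v j, wV k⟫‖ ^ 2 :=
          Finset.sum_congr rfl fun k _ => hexpand (wV k)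
      _ = ∑ j, ∑ k, μ j * ‖⟪v j, wV k⟫‖ ^ 2 := Finset.sum_comm
      _ = ∑ j, μ j * ∑ k, ‖⟪v j, wV k⟫‖ ^ 2 := by
          simp_rw [Finset.mul_sum]
      _ = ∑ j, μ j := by
          refine Finset.sum_congr rfl fun j _ => ?_
          have e2 : ∑ k, ‖⟪v j, wV k⟫‖ ^ 2 = ∑ k, ‖⟪b' k, v j⟫‖ ^ 2 := by
            refine Finset.sum_congr rfl fun k _ => ?_
            rw [hb'co k, norm_inner_symm]
          rw [e2, parseval b' (v j), v.orthonormal.1 j, one_pow, mul_one]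
  -- sorting the eigenvalues
  set σ := Tuple.sort μ with hσ
  have hmono : Monotone (μ ∘ σ) := Tuple.monotone_sort μ
  have hyper : ∀ k : Fin N, μ (σ (Fin.rev k)) ≤ approxNum f (k : ℕ) ^ 2 := by
    intro k
    set c := μ (σ (Fin.rev k)) with hc
    have hc0 : 0 ≤ c := hμnn _
    have hsq : Real.sqrt c ≤ approxNum f (k : ℕ) := by
      apply le_approxNum
      intro g hrank
      have hkN : (k : ℕ) + 1 ≤ N := k.isLt
      set θ : Fin ((k : ℕ) + 1) → Fin N := fun m => σ (Fin.rev (Fin.castLE hkN m)) with hθ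
      have hθinj : Function.Injective θ :=
        σ.injective.comp (Fin.rev_injective.comp (Fin.castLE_injective hkN))
      set y : Fin ((k : ℕ) + 1) → V := fun m => v (θ m) with hy
      have hyo : Orthonormal ℂ y := v.orthonormal.comp θ hθinj
      have hyge : ∀ m, c ≤ μ (θ m) := by
        intro m
        have h2 : (m : ℕ) ≤ (k : ℕ) := Nat.lt_succ_iff.mp m.isLt
        have h1 : Fin.rev k ≤ Fin.rev (Fin.castLE hkN m) := by
          rw [Fin.rev_le_rev, Fin.le_def, Fin.coe_castLE]
          exact h2
        exact hmono h1
      set W : Submodule ℂ V := Submodule.span ℂ (Set.range y) with hW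
      haveI : FiniteDimensional ℂ W := FiniteDimensional.span_of_finite ℂ (Set.finite_range y)
      have hWrank : Module.finrank ℂ W = (k : ℕ) + 1 := by
        rw [finrank_span_eq_card hyo.linearIndependent, Fintype.card_fin]
      set L : W →ₗ[ℂ] H := ((g : H →ₗ[ℂ] H).comp (V.subtype.comp W.subtype)) with hL
      have hnotinj : ¬ Function.Injective L := by
        intro hinj
        have h1 : Module.rank ℂ W = Module.rank ℂ (LinearMap.range L) :=
          (LinearEquiv.ofInjective L hinj).rank_eq
        have h2 : LinearMap.range L ≤ LinearMap.range (g : H →ₗ[ℂ] H) := by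
          rintro _ ⟨z, rfl⟩
          exact ⟨_, rfl⟩
        have h3 : Module.rank ℂ W ≤ ((k : ℕ) : Cardinal) :=
          h1 ▸ (le_trans (Submodule.rank_mono h2) hrank)
        rw [← Module.finrank_eq_rank, hWrank] at h3
        have h4 : (k : ℕ) + 1 ≤ (k : ℕ) := by exact_mod_cast h3
        exact (Nat.not_succ_le_self _) h4
      have hker : LinearMap.ker L ≠ ⊥ := fun hbot => hnotinj (LinearMap.ker_eq_bot.mp hbot)
      obtain ⟨x, hxker, hx0⟩ := (Submodule.ne_bot_iff _).mp hker
      have hgx : g (((x : W) : V) : H) = 0 := hxker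
      have hxV0 : (((x : W) : V) : H) ≠ 0 := by
        simp only [ne_eq, ZeroMemClass.coe_eq_zero]
        exact hx0
      have hnrm0 : ‖(((x : W) : V) : H)‖ ≠ 0 := norm_ne_zero_iff.mpr hxV0
      set z : V := ((‖(((x : W) : V) : H)‖⁻¹ : ℝ) : ℂ) • ((x : W) : V) with hz
      have hzW : z ∈ W := Submodule.smul_mem W _ (x : W).2
      have hz1 : ‖(z : H)‖ = 1 := by
        rw [hz, Submodule.coe_smul, norm_smul, Complex.norm_real, norm_inv, norm_norm,
          inv_mul_cancel₀ hnrm0]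
      have hgz : g (z : H) = 0 := by
        rw [hz, Submodule.coe_smul, map_smul, hgx, smul_zero]
      have hcoef : ∀ j : Fin N, (∀ m, j ≠ θ m) → ⟪v j, z⟫ = 0 := by
        intro j hj
        have hvo := v.orthonormal
        rw [orthonormal_iff_ite] at hvo
        have hgen : ∀ u ∈ Set.range y, ⟪v j, u⟫ = 0 := by
          rintro _ ⟨m, rfl⟩
          rw [hy]
          rw [hvo j (θ m), if_neg (hj m)]
        refine Submodule.span_induction (p := fun u _ => ⟪v j, u⟫ = 0)
          (fun u hu => hgen u hu) (inner_zero_right _) ?_ ?_ hzW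
        · intro a b _ _ ha hb; rw [inner_add_right, ha, hb, add_zero]
        · intro a u _ hu; rw [inner_smul_right, hu, mul_zero]
      have hnormz : ‖z‖ = 1 := by rw [← hz1]; rfl
      have hparse : ∑ j, ‖⟪v j, z⟫‖ ^ 2 = 1 := by
        rw [parseval v z, hnormz, one_pow]
      have hlow : c ≤ ‖f (z : H)‖ ^ 2 := by
        rw [hexpand z]
        calc c = ∑ j, c * ‖⟪v j, z⟫‖ ^ 2 := by rw [← Finset.mul_sum, hparse, mul_one]
          _ ≤ ∑ j, μ j * ‖⟪v j, z⟫‖ ^ 2 := by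
              refine Finset.sum_le_sum fun j _ => ?_
              by_cases hj : ⟪v j, z⟫ = 0
              · rw [hj]; simp
              · have hex : ∃ m, j = θ m := by
                  by_contra hcon
                  push_neg at hcon
                  exact hj (hcoef j hcon)
                obtain ⟨m, rfl⟩ := hex
                exact mul_le_mul_of_nonneg_right (hyge m) (by positivity)
      have hfz : ‖f (z : H)‖ ≤ ‖f - g‖ := by
        calc ‖f (z : H)‖ = ‖(f - g) (z : H)‖ := by
              rw [ContinuousLinearMap.sub_apply, hgz, sub_zero]
          _ ≤ ‖f - g‖ * ‖(z : H)‖ := (f - g).le_opNorm _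
          _ = ‖f - g‖ := by rw [hz1, mul_one]
      have hc2 : c ≤ ‖f - g‖ ^ 2 :=
        le_trans hlow (pow_le_pow_left₀ (norm_nonneg _) hfz 2)
      calc Real.sqrt c ≤ Real.sqrt (‖f - g‖ ^ 2) := Real.sqrt_le_sqrt hc2
        _ = ‖f - g‖ := Real.sqrt_sq (norm_nonneg _)
    calc c = Real.sqrt c ^ 2 := (Real.sq_sqrt hc0).symm
      _ ≤ approxNum f (k : ℕ) ^ 2 := pow_le_pow_left₀ (Real.sqrt_nonneg _) hsq 2
  have final : ∑ j, μ j ≤ ∑ n ∈ Finset.range N, approxNum f n ^ 2 := by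
    have e1 : ∑ j, μ j = ∑ k : Fin N, μ (σ (Fin.rev k)) := by
      calc ∑ j, μ j = ∑ k, μ (σ k) := (Equiv.sum_comp σ μ).symm
        _ = ∑ k, μ (σ (Fin.rev k)) := by
            rw [← Equiv.sum_comp (Fin.revPerm) (fun k => μ (σ k))]
            simp [Fin.revPerm_apply]
    rw [e1]
    refine le_trans (Finset.sum_le_sum fun k _ => hyper k) ?_
    exact le_of_eq (Finset.sum_range (fun n => approxNum f n ^ 2)).symm
  rw [trace_eq]
  exact final

lemma key_finset (f : H →L[ℂ] H) {ι : Type} {e : ι → H} (he : Orthonormal ℂ e)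
    (t : Finset ι) :
    ∑ i ∈ t, ‖f (e i)‖ ^ 2 ≤ ∑ n ∈ Finset.range t.card, approxNum f n ^ 2 := by
  classical
  set φ : Fin t.card ≃ {x // x ∈ t} := t.equivFin.symm with hφ
  have hwo : Orthonormal ℂ (fun k : Fin t.card => e (φ k)) :=
    he.comp (fun k => ((φ k : {x // x ∈ t}) : ι))
      (fun a b hab => φ.injective (Subtype.ext hab))
  have h1 := key_fin f hwo
  have h2 : ∑ i ∈ t, ‖f (e i)‖ ^ 2 = ∑ k : Fin t.card, ‖f (e (φ k))‖ ^ 2 := by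
    rw [← Finset.sum_coe_sort t (fun i => ‖f (e i)‖ ^ 2)]
    exact (Equiv.sum_comp φ (fun i : {x // x ∈ t} => ‖f (e (i : ι))‖ ^ 2)).symm
  rw [h2]
  exact h1

end Core

/-- every Hilbert–Schmidt operator on a separable Hilbert space
(a compact operator whose singular values are square-summable) factors through
`ℓ¹`. -/
theorem statement7 {H : Type} [NormedAddCommGroup H] [InnerProductSpace ℂ H]
    [CompleteSpace H] [TopologicalSpace.SeparableSpace H]
    (f : H →L[ℂ] H) (hf_compact : IsCompactOperator f)
    (hf_HS : Summable fun n => approxNum f n ^ 2) :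
    ∃ (g : H →L[ℂ] lp (fun _ : ℕ => ℂ) 1) (h : lp (fun _ : ℕ => ℂ) 1 →L[ℂ] H),
      f = h.comp g := by
  classical
  obtain ⟨wset, b, hb⟩ := exists_hilbertBasis ℂ H
  have hbo : Orthonormal ℂ (⇑b) := b.orthonormal
  haveI hcnt : Countable wset := by
    refine Pairwise.countable_of_isOpen_disjoint
      (s := fun i : wset => Metric.ball (b i) (1/2)) ?_ (fun i => Metric.isOpen_ball)
      (fun i => Metric.nonempty_ball.mpr (by norm_num))
    intro i j hij
    refine Metric.ball_disjoint_ball ?_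
    have h2 : ‖b i - b j‖ ^ 2 = 2 := by
      rw [@norm_sub_sq ℂ, hbo.2 hij]
      simp [hbo.1 i, hbo.1 j]
      norm_num
    have h3 : (1:ℝ) ≤ ‖b i - b j‖ := by nlinarith [norm_nonneg (b i - b j)]
    rw [dist_eq_norm]
    linarith
  obtain ⟨emb, hemb⟩ := exists_injective_nat wset
  set e' : ℕ → H := Function.extend emb (⇑b) 0 with he'
  have he'1 : ∀ i, e' (emb i) = b i := fun i => hemb.extend_apply (⇑b) 0 i
  have he'2 : ∀ n, n ∉ Set.range emb → e' n = 0 := by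
    intro n hn
    rw [he', Function.extend_apply' _ _ _ (by simpa using hn)]
    rfl
  have hsum_wset : Summable (fun i : wset => ‖f (b i)‖ ^ 2) := by
    refine summable_of_sum_le (c := ∑' n, approxNum f n ^ 2) (fun i => by positivity) ?_
    intro t
    refine le_trans (key_finset f hbo t) ?_
    exact hf_HS.sum_le_tsum (Finset.range t.card) (fun n _ => by positivity)
  set M2 := ∑' i : wset, ‖f (b i)‖ ^ 2 with hM2
  have hM2nn : 0 ≤ M2 := tsum_nonneg (fun i => by positivity)
  have hsum_nat : Summable (fun n : ℕ => ‖f (e' n)‖ ^ 2) := by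
    refine (hemb.summable_iff (fun n hn => by rw [he'2 n hn]; simp)).mp ?_
    have h0 : ((fun n => ‖f (e' n)‖ ^ 2) ∘ emb) = fun i : wset => ‖f (b i)‖ ^ 2 :=
      funext fun i => by simp [Function.comp, he'1 i]
    rw [h0]
    exact hsum_wset
  have hbessel : ∀ x : H, Summable (fun n : ℕ => ‖⟪e' n, x⟫‖ ^ 2) := by
    intro x
    refine (hemb.summable_iff (fun n hn => by rw [he'2 n hn]; simp)).mp ?_
    have h0 : ((fun n => ‖⟪e' n, x⟫‖ ^ 2) ∘ emb) = fun i : wset => ‖⟪b i, x⟫‖ ^ 2 :=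
      funext fun i => by simp [Function.comp, he'1 i]
    rw [h0]
    exact hbo.inner_products_summable x
  have hmem : ∀ x : H, Memℓp (fun n => ((‖f (e' n)‖ : ℝ) : ℂ) * ⟪e' n, x⟫) 1 := by
    intro x
    apply memℓp_gen
    simp only [ENNReal.toReal_one, Real.rpow_one]
    have hs : Summable (fun n => (‖f (e' n)‖ ^ 2 + ‖⟪e' n, x⟫‖ ^ 2) / 2) :=
      ((hsum_nat).add (hbessel x)).div_const 2
    refine Summable.of_nonneg_of_le (fun n => norm_nonneg _) (fun n => ?_) hs
    rw [norm_mul, Complex.norm_real, norm_norm]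
    nlinarith [sq_nonneg (‖f (e' n)‖ - ‖⟪e' n, x⟫‖), norm_nonneg (f (e' n)),
      norm_nonneg (⟪e' n, x⟫ : ℂ)]
  have hbound : ∀ x : H, ∀ s : Finset ℕ,
      ∑ n ∈ s, ‖((‖f (e' n)‖ : ℝ) : ℂ) * ⟪e' n, x⟫‖ ≤ Real.sqrt M2 * ‖x‖ := by
    intro x s
    have hres : ∑ n ∈ s, ‖((‖f (e' n)‖ : ℝ) : ℂ) * ⟪e' n, x⟫‖
        = ∑ i ∈ s.preimage emb hemb.injOn,
            ‖((‖f (e' (emb i))‖ : ℝ) : ℂ) * ⟪e' (emb i), x⟫‖ := by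
      refine (Finset.sum_preimage emb s hemb.injOn _ ?_).symm
      intro n _ hnr
      rw [he'2 n hnr]
      simp
    rw [hres]
    set t := s.preimage emb hemb.injOn with ht
    have hterm : ∀ i, ‖((‖f (e' (emb i))‖ : ℝ) : ℂ) * ⟪e' (emb i), x⟫‖
        = ‖f (b i)‖ * ‖(⟪b i, x⟫ : ℂ)‖ := by
      intro i
      rw [norm_mul, Complex.norm_real, norm_norm, he'1 i]
    rw [Finset.sum_congr rfl fun i _ => hterm i]
    have hcs := Finset.sum_mul_sq_le_sq_mul_sq t (fun i => ‖f (b i)‖)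
      (fun i => ‖(⟪b i, x⟫ : ℂ)‖)
    have h1 : ∑ i ∈ t, ‖f (b i)‖ ^ 2 ≤ M2 :=
      hsum_wset.sum_le_tsum t (fun i _ => by positivity)
    have h2 : ∑ i ∈ t, ‖(⟪b i, x⟫ : ℂ)‖ ^ 2 ≤ ‖x‖ ^ 2 := hbo.sum_inner_products_le x
    have h3 : (∑ i ∈ t, ‖f (b i)‖ * ‖(⟪b i, x⟫ : ℂ)‖) ^ 2 ≤ M2 * ‖x‖ ^ 2 := by
      refine le_trans hcs ?_
      exact mul_le_mul h1 h2 (Finset.sum_nonneg fun i _ => by positivity) hM2nn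
    have h4 : 0 ≤ ∑ i ∈ t, ‖f (b i)‖ * ‖(⟪b i, x⟫ : ℂ)‖ :=
      Finset.sum_nonneg fun i _ => by positivity
    calc ∑ i ∈ t, ‖f (b i)‖ * ‖(⟪b i, x⟫ : ℂ)‖
        = Real.sqrt ((∑ i ∈ t, ‖f (b i)‖ * ‖(⟪b i, x⟫ : ℂ)‖) ^ 2) := (Real.sqrt_sq h4).symm
      _ ≤ Real.sqrt (M2 * ‖x‖ ^ 2) := Real.sqrt_le_sqrt h3
      _ = Real.sqrt M2 * ‖x‖ := by
          rw [Real.sqrt_mul hM2nn, Real.sqrt_sq (norm_nonneg x)]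
  set Gl : H →ₗ[ℂ] lp (fun _ : ℕ => ℂ) 1 :=
    { toFun := fun x => ⟨fun n => ((‖f (e' n)‖ : ℝ) : ℂ) * ⟪e' n, x⟫, hmem x⟩
      map_add' := by
        intro x y
        apply lp.ext
        funext n
        simp only [lp.coeFn_add, Pi.add_apply]
        show ((‖f (e' n)‖ : ℝ) : ℂ) * ⟪e' n, x + y⟫
          = ((‖f (e' n)‖ : ℝ) : ℂ) * ⟪e' n, x⟫ + ((‖f (e' n)‖ : ℝ) : ℂ) * ⟪e' n, y⟫
        rw [inner_add_right, mul_add]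
      map_smul' := by
        intro c x
        apply lp.ext
        funext n
        simp only [lp.coeFn_smul, Pi.smul_apply, RingHom.id_apply]
        show ((‖f (e' n)‖ : ℝ) : ℂ) * ⟪e' n, c • x⟫
          = c • (((‖f (e' n)‖ : ℝ) : ℂ) * ⟪e' n, x⟫)
        rw [inner_smul_right, smul_eq_mul]
        ring } with hGl
  set G : H →L[ℂ] lp (fun _ : ℕ => ℂ) 1 :=
    Gl.mkContinuous (Real.sqrt M2) (fun x => by
      refine lp.norm_le_of_forall_sum_le (by norm_num) (by positivity) ?_
      intro s
      simp only [ENNReal.toReal_one, Real.rpow_one]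
      exact hbound x s) with hG
  set u : ℕ → H := fun n => if h0 : f (e' n) = 0 then 0
    else ((‖f (e' n)‖⁻¹ : ℝ) : ℂ) • f (e' n) with hu
  have hunorm : ∀ n, ‖u n‖ ≤ 1 := by
    intro n
    rw [hu]
    by_cases h0 : f (e' n) = 0
    · simp [h0]
    · simp only [h0, dif_neg, not_false_iff]
      rw [norm_smul, Complex.norm_real, norm_inv, norm_norm,
        inv_mul_cancel₀ (norm_ne_zero_iff.mpr h0)]
  have huf : ∀ n, ((‖f (e' n)‖ : ℝ) : ℂ) • u n = f (e' n) := by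
    intro n
    rw [hu]
    by_cases h0 : f (e' n) = 0
    · simp [h0]
    · simp only [h0, dif_neg, not_false_iff]
      rw [smul_smul, ← Complex.ofReal_mul, mul_inv_cancel₀ (norm_ne_zero_iff.mpr h0)]
      simp
  have hasummable : ∀ a : lp (fun _ : ℕ => ℂ) 1, Summable (fun n => ‖a n‖) := by
    intro a
    have h1 := (lp.memℓp a).summable (p := 1) (by norm_num)
    simpa using h1
  have husummable : ∀ a : lp (fun _ : ℕ => ℂ) 1, Summable (fun n => a n • u n) := by
    intro a
    refine Summable.of_norm_bounded (hasummable a) ?_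
    intro n
    rw [norm_smul]
    exact mul_le_of_le_one_right (norm_nonneg _) (hunorm n)
  have hnormsummable : ∀ a : lp (fun _ : ℕ => ℂ) 1, Summable (fun n => ‖a n • u n‖) := by
    intro a
    refine Summable.of_nonneg_of_le (fun n => norm_nonneg _) (fun n => ?_) (hasummable a)
    rw [norm_smul]
    exact mul_le_of_le_one_right (norm_nonneg _) (hunorm n)
  set hl : lp (fun _ : ℕ => ℂ) 1 →ₗ[ℂ] H :=
    { toFun := fun a => ∑' n, a n • u n
      map_add' := by
        intro a c
        show ∑' n, (a + c) n • u n = _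
        rw [← Summable.tsum_add (husummable a) (husummable c)]
        congr 1
        funext n
        simp only [lp.coeFn_add, Pi.add_apply, add_smul]
      map_smul' := by
        intro r a
        show ∑' n, (r • a) n • u n = r • ∑' n, a n • u n
        rw [← Summable.tsum_const_smul r (husummable a)]
        congr 1
        funext n
        simp only [lp.coeFn_smul, Pi.smul_apply, smul_eq_mul, mul_smul] } with hhl
  have hlbound : ∀ a : lp (fun _ : ℕ => ℂ) 1, ‖hl a‖ ≤ 1 * ‖a‖ := by
    intro a
    rw [one_mul]
    have h3 : HasSum (fun n => ‖a n‖) ‖a‖ := by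
      have := lp.hasSum_norm (p := 1) (by norm_num) a
      simpa using this
    calc ‖hl a‖ ≤ ∑' n, ‖a n • u n‖ := norm_tsum_le_tsum_norm (hnormsummable a)
      _ ≤ ∑' n, ‖a n‖ := by
          refine Summable.tsum_le_tsum (fun n => ?_) (hnormsummable a) (hasummable a)
          rw [norm_smul]
          exact mul_le_of_le_one_right (norm_nonneg _) (hunorm n)
      _ = ‖a‖ := h3.tsum_eq
  set hC : lp (fun _ : ℕ => ℂ) 1 →L[ℂ] H := hl.mkContinuous 1 hlbound with hhC
  refine ⟨G, hC, ?_⟩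
  ext x
  have hx : HasSum (fun i : wset => (⟪b i, x⟫ : ℂ) • f (b i)) (f x) := by
    have h1 := (b.hasSum_repr x).mapL f
    have h2 : ∀ i : wset, f (b.repr x i • b i) = (⟪b i, x⟫ : ℂ) • f (b i) := by
      intro i
      rw [map_smul, b.repr_apply_apply]
    rw [funext h2] at h1
    exact h1
  have hx' : HasSum (fun n : ℕ => (⟪e' n, x⟫ : ℂ) • f (e' n)) (f x) := by
    refine (hemb.hasSum_iff (fun n hn => by rw [he'2 n hn]; simp)).mp ?_
    have h0 : ((fun n => (⟪e' n, x⟫ : ℂ) • f (e' n)) ∘ emb)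
        = fun i : wset => (⟪b i, x⟫ : ℂ) • f (b i) :=
      funext fun i => by simp [Function.comp, he'1 i]
    rw [h0]
    exact hx
  show f x = hC (G x)
  have hCG : hC (G x) = ∑' n, (((‖f (e' n)‖ : ℝ) : ℂ) * ⟪e' n, x⟫) • u n := rfl
  rw [hCG]
  have h4 : ∀ n, (((‖f (e' n)‖ : ℝ) : ℂ) * ⟪e' n, x⟫) • u n
      = (⟪e' n, x⟫ : ℂ) • f (e' n) := by
    intro n
    rw [mul_comm, mul_smul, huf n]
  rw [tsum_congr h4, hx'.tsum_eq]
end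

section
/- Let H be a Hilbert space, φ : H → H a quasilinear map, and Φ a homogeneous map on finite-rank operators satisfying (a) ‖Φ(y ⊗ x) − y ⊗ φ(x)‖_p ≤ C‖y‖‖x‖ for all x, y ∈ H, and (b) ‖Φ(fa) − (Φf)a‖_p ≤ C‖f‖_p‖a‖ for all finite-rank f and bounded a. Then for every finite-rank operator f and every x ∈ H, ‖(Φf)(x) − φ(f(x))‖ ≤ 2C‖f‖_p‖x‖; in particular sup_{‖x‖≤1} ‖(Φf)(x) − φ(f(x))‖ ≤ 2C‖f‖_p. -/
open scoped InnerProductSpace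

/-- The Schatten `p` quasinorm `(Σ s_n(f)^p)^(1/p)`. -/
noncomputable def spNorm {H : Type} [NormedAddCommGroup H]
    [InnerProductSpace ℂ H] [CompleteSpace H] (p : ℝ) (f : H →L[ℂ] H) : ℝ :=
  (∑' n, approxNum f n ^ p) ^ (1 / p)

def FiniteRank {H : Type} [NormedAddCommGroup H] [InnerProductSpace ℂ H]
    [CompleteSpace H] (f : H →L[ℂ] H) : Prop :=
  Module.Finite ℂ (LinearMap.range (f : H →ₗ[ℂ] H))

/-- The rank-one operator `y ⊗ x : v ↦ ⟨v, y⟩ x = ⟪y, v⟫ x`, which satisfies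
`f ∘ (y ⊗ x) = y ⊗ f x` and `‖y ⊗ x‖ = ‖y‖ ‖x‖`. -/
noncomputable def rankOne {H : Type} [NormedAddCommGroup H]
    [InnerProductSpace ℂ H] [CompleteSpace H] (y x : H) : H →L[ℂ] H :=
  (innerSL ℂ y).smulRight x

set_option linter.unusedSectionVars false
namespace S9

variable {H : Type} [NormedAddCommGroup H] [InnerProductSpace ℂ H] [CompleteSpace H]

lemma rank_range_zero :
    Module.rank ℂ (LinearMap.range ((0 : H →L[ℂ] H) : H →ₗ[ℂ] H)) = 0 := by
  simp [LinearMap.range_eq_bot.2 rfl]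

lemma approxSet_nonempty (f : H →L[ℂ] H) (n : ℕ) :
    Set.Nonempty {r : ℝ | ∃ g : H →L[ℂ] H,
      Module.rank ℂ (LinearMap.range (g : H →ₗ[ℂ] H)) ≤ n ∧ r = ‖f - g‖} := by
  exact ⟨‖f - 0‖, 0, by simp [rank_range_zero], rfl⟩

lemma approxSet_bddBelow (f : H →L[ℂ] H) (n : ℕ) :
    BddBelow {r : ℝ | ∃ g : H →L[ℂ] H,
      Module.rank ℂ (LinearMap.range (g : H →ₗ[ℂ] H)) ≤ n ∧ r = ‖f - g‖} := by
  exact ⟨0, fun r hr => by obtain ⟨g, -, rfl⟩ := hr; positivity⟩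

lemma approxNum_nonneg (f : H →L[ℂ] H) (n : ℕ) : 0 ≤ approxNum f n :=
  le_csInf (approxSet_nonempty f n) (fun r hr => by obtain ⟨g, -, rfl⟩ := hr; positivity)

lemma approxNum_le (f g : H →L[ℂ] H) (n : ℕ)
    (h : Module.rank ℂ (LinearMap.range (g : H →ₗ[ℂ] H)) ≤ n) :
    approxNum f n ≤ ‖f - g‖ :=
  csInf_le (approxSet_bddBelow f n) ⟨g, h, rfl⟩

lemma le_approxNum (f : H →L[ℂ] H) (n : ℕ) (r : ℝ)
    (h : ∀ g : H →L[ℂ] H, Module.rank ℂ (LinearMap.range (g : H →ₗ[ℂ] H)) ≤ n →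
      r ≤ ‖f - g‖) : r ≤ approxNum f n :=
  le_csInf (approxSet_nonempty f n) (fun s hs => by obtain ⟨g, hg, rfl⟩ := hs; exact h g hg)

lemma approxNum_eq_zero (f : H →L[ℂ] H) (n : ℕ)
    (h : Module.rank ℂ (LinearMap.range (f : H →ₗ[ℂ] H)) ≤ n) :
    approxNum f n = 0 :=
  le_antisymm (by simpa using approxNum_le f f n h) (approxNum_nonneg f n)

lemma approxNum_zero_eq (f : H →L[ℂ] H) : approxNum f 0 = ‖f‖ := by
  refine le_antisymm (by simpa using approxNum_le f 0 0 (by simp [rank_range_zero])) ?_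
  refine le_approxNum f 0 ‖f‖ (fun g hg => ?_)
  have h0 : Module.rank ℂ (LinearMap.range (g : H →ₗ[ℂ] H)) = 0 := le_antisymm (by simpa using hg) zero_le
  have : LinearMap.range (g : H →ₗ[ℂ] H) = ⊥ := Submodule.rank_eq_zero.1 h0
  have hgz : g = 0 := by
    ext v
    have := LinearMap.range_eq_bot.1 this
    exact congrFun (congrArg DFunLike.coe this) v
  simp [hgz]

lemma approxNum_neg (f : H →L[ℂ] H) (n : ℕ) : approxNum (-f) n = approxNum f n := by
  have key : ∀ f : H →L[ℂ] H, approxNum (-f) n ≤ approxNum f n := by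
    intro f
    refine le_approxNum _ n _ (fun g hg => ?_)
    have : approxNum (-f) n ≤ ‖-f - -g‖ := by
      refine approxNum_le _ _ _ ?_
      have : LinearMap.range ((-g : H →L[ℂ] H) : H →ₗ[ℂ] H) = LinearMap.range (g : H →ₗ[ℂ] H) := by
        simp [LinearMap.range_neg]
      rw [this]; exact hg
    rwa [neg_sub_neg, norm_sub_rev] at this
  refine le_antisymm (key f) ?_
  have := key (-f); simpa using this

/-- monotonicity in `n` -/
lemma approxNum_anti (f : H →L[ℂ] H) {m n : ℕ} (h : m ≤ n) :
    approxNum f n ≤ approxNum f m := by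
  refine le_approxNum f m _ (fun g hg => approxNum_le f g n (hg.trans (by exact_mod_cast Nat.cast_le.2 h)))

end S9

namespace S9
variable {H : Type} [NormedAddCommGroup H] [InnerProductSpace ℂ H] [CompleteSpace H]

lemma approxNum_add_le_of_rank (T G : H →L[ℂ] H) (n k : ℕ)
    (hG : LinearMap.rank (G : H →ₗ[ℂ] H) ≤ k) :
    approxNum (T + G) (n + k) ≤ approxNum T n := by
  refine le_approxNum T n _ (fun F hF => ?_)
  have hrk : LinearMap.rank ((F + G : H →L[ℂ] H) : H →ₗ[ℂ] H) ≤ ((n + k : ℕ) : Cardinal) := by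
    push_cast
    refine le_trans ?_ (add_le_add hF hG)
    exact LinearMap.rank_add_le _ _
  have h2 := approxNum_le (T + G) (F + G) (n + k) hrk
  simpa [add_sub_add_right_eq_sub] using h2

lemma exists_rank_le_of_fr (f : H →L[ℂ] H) (hf : FiniteRank f) :
    ∃ N : ℕ, LinearMap.rank (f : H →ₗ[ℂ] H) ≤ N := by
  have : Module.Finite ℂ (LinearMap.range (f : H →ₗ[ℂ] H)) := hf
  have h := Module.rank_lt_aleph0 ℂ (LinearMap.range (f : H →ₗ[ℂ] H))
  obtain ⟨N, hN⟩ := Cardinal.lt_aleph0.1 h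
  exact ⟨N, le_of_eq hN⟩

lemma approxNum_eventually_zero (f : H →L[ℂ] H) (hf : FiniteRank f) :
    ∃ N : ℕ, ∀ n, N ≤ n → approxNum f n = 0 := by
  obtain ⟨N, hN⟩ := exists_rank_le_of_fr f hf
  exact ⟨N, fun n hn => approxNum_eq_zero f n (hN.trans (by exact_mod_cast Nat.cast_le.2 hn))⟩

lemma summable_fr {p : ℝ} (hp : 0 < p) (f : H →L[ℂ] H) (hf : FiniteRank f) :
    Summable (fun n => approxNum f n ^ p) := by
  obtain ⟨N, hN⟩ := approxNum_eventually_zero f hf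
  refine summable_of_ne_finset_zero (s := Finset.range N) (fun n hn => ?_)
  have hzero : approxNum f n = 0 :=
    hN n (le_of_not_gt (fun h => hn (Finset.mem_range.2 h)))
  rw [hzero, Real.zero_rpow hp.ne']

lemma tsum_approx_nonneg (p : ℝ) (f : H →L[ℂ] H) : 0 ≤ ∑' n, approxNum f n ^ p :=
  tsum_nonneg (fun n => Real.rpow_nonneg (approxNum_nonneg f n) p)

lemma spNorm_nonneg (p : ℝ) (f : H →L[ℂ] H) : 0 ≤ spNorm p f :=
  Real.rpow_nonneg (tsum_approx_nonneg p f) _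

lemma pow_spNorm {p : ℝ} (hp : 0 < p) (f : H →L[ℂ] H) :
    spNorm p f ^ p = ∑' n, approxNum f n ^ p := by
  rw [spNorm, ← Real.rpow_mul (tsum_approx_nonneg p f), one_div_mul_cancel hp.ne',
    Real.rpow_one]

lemma norm_le_spNorm {p : ℝ} (hp : 0 < p) (f : H →L[ℂ] H) (hf : FiniteRank f) :
    ‖f‖ ≤ spNorm p f := by
  have h1 : ‖f‖ ^ p ≤ ∑' n, approxNum f n ^ p := by
    rw [← approxNum_zero_eq f]
    exact Summable.le_tsum (summable_fr hp f hf) 0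
      (fun j _ => Real.rpow_nonneg (approxNum_nonneg f j) p)
  calc ‖f‖ = (‖f‖ ^ p) ^ (1 / p) := by
        rw [← Real.rpow_mul (norm_nonneg f), mul_one_div_cancel hp.ne', Real.rpow_one]
    _ ≤ (∑' n, approxNum f n ^ p) ^ (1 / p) :=
        Real.rpow_le_rpow (Real.rpow_nonneg (norm_nonneg f) p) h1 (by positivity)
    _ = spNorm p f := rfl

lemma sum_le_pow_spNorm {p : ℝ} (hp : 0 < p) (f : H →L[ℂ] H) (hf : FiniteRank f)
    (s : Finset ℕ) : ∑ j ∈ s, approxNum f j ^ p ≤ spNorm p f ^ p := by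
  rw [pow_spNorm hp]
  exact Summable.sum_le_tsum s (fun j _ => Real.rpow_nonneg (approxNum_nonneg f j) p)
    (summable_fr hp f hf)

lemma spNorm_neg (p : ℝ) (f : H →L[ℂ] H) : spNorm p (-f) = spNorm p f := by
  unfold spNorm
  congr 1
  exact tsum_congr (fun n => by rw [approxNum_neg])

lemma finiteRank_zero : FiniteRank (0 : H →L[ℂ] H) := by
  unfold FiniteRank
  rw [show ((0 : H →L[ℂ] H) : H →ₗ[ℂ] H) = 0 from rfl, LinearMap.range_zero]
  infer_instance

lemma rankOne_apply (y x v : H) : rankOne y x v = (inner ℂ y v : ℂ) • x := rfl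

lemma range_rankOne_le (y x : H) :
    LinearMap.range ((rankOne y x : H →L[ℂ] H) : H →ₗ[ℂ] H) ≤ Submodule.span ℂ {x} := by
  rintro v ⟨w, rfl⟩
  exact Submodule.smul_mem _ _ (Submodule.mem_span_singleton_self x)

lemma finiteRank_rankOne (y x : H) : FiniteRank (rankOne y x) := by
  unfold FiniteRank
  have : FiniteDimensional ℂ (Submodule.span ℂ ({x} : Set H)) := inferInstance
  exact Submodule.finiteDimensional_of_le (range_rankOne_le y x)

lemma rank_rankOne_le (y x : H) :
    LinearMap.rank ((rankOne y x : H →L[ℂ] H) : H →ₗ[ℂ] H) ≤ 1 := by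
  refine le_trans (Submodule.rank_mono (range_rankOne_le y x)) ?_
  refine le_trans (rank_span_le _) ?_
  simp

lemma finiteRank_add {f g : H →L[ℂ] H} (hf : FiniteRank f) (hg : FiniteRank g) :
    FiniteRank (f + g) := by
  unfold FiniteRank at *
  haveI := hf; haveI := hg
  haveI : FiniteDimensional ℂ
      (LinearMap.range (f : H →ₗ[ℂ] H) ⊔ LinearMap.range (g : H →ₗ[ℂ] H) :
        Submodule ℂ H) := Submodule.finiteDimensional_sup _ _
  have hle : LinearMap.range ((f + g : H →L[ℂ] H) : H →ₗ[ℂ] H) ≤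
      LinearMap.range (f : H →ₗ[ℂ] H) ⊔ LinearMap.range (g : H →ₗ[ℂ] H) := by
    rintro v ⟨w, rfl⟩
    exact Submodule.add_mem _ (Submodule.mem_sup_left ⟨w, rfl⟩)
      (Submodule.mem_sup_right ⟨w, rfl⟩)
  exact Submodule.finiteDimensional_of_le hle

lemma finiteRank_comp (f g : H →L[ℂ] H) (hg : FiniteRank g) :
    FiniteRank (f.comp g) := by
  unfold FiniteRank at *
  haveI := hg
  rw [ContinuousLinearMap.toLinearMap_comp, LinearMap.range_comp]
  exact Module.Finite.map _ _

lemma rank_comp_le (f g : H →L[ℂ] H) :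
    LinearMap.rank ((f.comp g : H →L[ℂ] H) : H →ₗ[ℂ] H) ≤
      LinearMap.rank (g : H →ₗ[ℂ] H) := by
  rw [ContinuousLinearMap.toLinearMap_comp]
  exact LinearMap.rank_comp_le_right _ _

lemma comp_rankOne (f : H →L[ℂ] H) (y x : H) :
    f.comp (rankOne y x) = rankOne y (f x) := by
  ext v
  simp [rankOne_apply, map_smul]

lemma norm_rankOne_le (y x : H) : ‖rankOne y x‖ ≤ ‖y‖ * ‖x‖ := by
  refine ContinuousLinearMap.opNorm_le_bound _ (by positivity) (fun v => ?_)
  rw [rankOne_apply, norm_smul]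
  calc ‖(inner ℂ y v : ℂ)‖ * ‖x‖ ≤ ‖y‖ * ‖v‖ * ‖x‖ :=
        mul_le_mul_of_nonneg_right (norm_inner_le_norm y v) (norm_nonneg x)
    _ = ‖y‖ * ‖x‖ * ‖v‖ := by ring

end S9

namespace S9
variable {H : Type} [NormedAddCommGroup H] [InnerProductSpace ℂ H] [CompleteSpace H]

local notation "⟪" x ", " y "⟫" => @inner ℂ H _ x y

/-- Orthonormality of a family on a finset. -/
def ONOn (x : ℕ → H) (s : Finset ℕ) : Prop :=
  (∀ i ∈ s, ‖x i‖ = 1) ∧ (∀ i ∈ s, ∀ j ∈ s, i ≠ j → ⟪x i, x j⟫ = 0)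

lemma ONOn.mono {x : ℕ → H} {s t : Finset ℕ} (h : ONOn x t) (hst : s ⊆ t) : ONOn x s :=
  ⟨fun i hi => h.1 i (hst hi), fun i hi j hj hij => h.2 i (hst hi) j (hst hj) hij⟩

lemma ONOn.inner_self {x : ℕ → H} {s : Finset ℕ} (h : ONOn x s) {i : ℕ} (hi : i ∈ s) :
    ⟪x i, x i⟫ = 1 := by
  rw [inner_self_eq_norm_sq_to_K, h.1 i hi]
  norm_num

lemma on_inner_sum {x : ℕ → H} {s : Finset ℕ} (h : ONOn x s) (a b : ℕ → ℂ) :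
    ⟪∑ i ∈ s, a i • x i, ∑ i ∈ s, b i • x i⟫ = ∑ i ∈ s, (starRingEnd ℂ) (a i) * b i := by
  rw [sum_inner]
  refine Finset.sum_congr rfl (fun i hi => ?_)
  rw [inner_sum]
  rw [Finset.sum_eq_single i]
  · rw [inner_smul_left, inner_smul_right, h.inner_self hi, mul_one]
  · intro j hj hji
    rw [inner_smul_left, inner_smul_right, h.2 i hi j hj (Ne.symm hji)]
    ring
  · intro hni
    exact absurd hi hni

lemma on_norm_sum_sq {x : ℕ → H} {s : Finset ℕ} (h : ONOn x s) (a : ℕ → ℂ) :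
    ‖∑ i ∈ s, a i • x i‖ ^ 2 = ∑ i ∈ s, ‖a i‖ ^ 2 := by
  have h1 := @inner_self_eq_norm_sq ℂ _ _ _ _ (∑ i ∈ s, a i • x i)
  rw [on_inner_sum h a a] at h1
  rw [← h1, map_sum]
  refine Finset.sum_congr rfl fun i _ => ?_
  rw [RCLike.conj_mul]
  rw [← RCLike.ofReal_pow, RCLike.ofReal_re]

/-- the orthogonal projection associated to an orthonormal family -/
noncomputable def projOp (x : ℕ → H) (s : Finset ℕ) : H →L[ℂ] H :=
  ∑ i ∈ s, rankOne (x i) (x i)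

lemma projOp_apply (x : ℕ → H) (s : Finset ℕ) (w : H) :
    projOp x s w = ∑ i ∈ s, ⟪x i, w⟫ • x i := by
  simp [projOp, rankOne_apply, ContinuousLinearMap.sum_apply]

lemma finiteRank_projOp (x : ℕ → H) (s : Finset ℕ) : FiniteRank (projOp x s) := by
  classical
  induction s using Finset.induction with
  | empty => simpa [projOp] using finiteRank_zero
  | insert _ _ hnot ih =>
      rw [projOp, Finset.sum_insert hnot]
      exact finiteRank_add (finiteRank_rankOne _ _) ih

lemma rank_projOp_le (x : ℕ → H) (s : Finset ℕ) :
    LinearMap.rank ((projOp x s : H →L[ℂ] H) : H →ₗ[ℂ] H) ≤ (s.card : Cardinal) := by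
  classical
  induction s using Finset.induction with
  | empty => simp [projOp, rank_range_zero]
  | insert i s hnot ih =>
      rw [projOp, Finset.sum_insert hnot]
      have h1 : LinearMap.rank
          ((rankOne (x i) (x i) + ∑ j ∈ s, rankOne (x j) (x j) : H →L[ℂ] H) : H →ₗ[ℂ] H) ≤
          LinearMap.rank ((rankOne (x i) (x i) : H →L[ℂ] H) : H →ₗ[ℂ] H) +
          LinearMap.rank ((projOp x s : H →L[ℂ] H) : H →ₗ[ℂ] H) := by
        rw [ContinuousLinearMap.coe_add]
        exact LinearMap.rank_add_le _ _
      refine h1.trans ?_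
      rw [Finset.card_insert_of_notMem hnot]
      push_cast
      rw [add_comm ((s.card : ℕ) : Cardinal) (1 : Cardinal)]
      exact add_le_add (rank_rankOne_le _ _) ih

lemma inner_projOp {x : ℕ → H} {s : Finset ℕ} (h : ONOn x s) {l : ℕ} (hl : l ∈ s) (w : H) :
    ⟪x l, projOp x s w⟫ = ⟪x l, w⟫ := by
  classical
  rw [projOp_apply, inner_sum]
  rw [Finset.sum_eq_single l]
  · rw [inner_smul_right, h.inner_self hl, mul_one]
  · intro j hj hjl
    rw [inner_smul_right, h.2 l hl j hj (Ne.symm hjl)]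
    ring
  · intro hnl
    exact absurd hl hnl

lemma inner_projOp_perp {x : ℕ → H} {s : Finset ℕ} {y : H}
    (hy : ∀ i ∈ s, ⟪y, x i⟫ = 0) (w : H) : ⟪y, projOp x s w⟫ = 0 := by
  rw [projOp_apply, inner_sum]
  refine Finset.sum_eq_zero (fun i hi => ?_)
  rw [inner_smul_right, hy i hi]
  ring

lemma inner_sub_projOp {x : ℕ → H} {s : Finset ℕ} (h : ONOn x s) {l : ℕ} (hl : l ∈ s)
    (w : H) : ⟪x l, w - projOp x s w⟫ = 0 := by
  rw [inner_sub_right, inner_projOp h hl, sub_self]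

lemma projOp_inner_decomp {x : ℕ → H} {s : Finset ℕ} (h : ONOn x s) (w : H) :
    ⟪w - projOp x s w, projOp x s w⟫ = 0 := by
  refine inner_projOp_perp (fun i hi => ?_) w
  rw [← inner_conj_symm, inner_sub_projOp h hi, map_zero]

lemma norm_sq_decomp {x : ℕ → H} {s : Finset ℕ} (h : ONOn x s) (w : H) :
    ‖w‖ ^ 2 = ‖w - projOp x s w‖ ^ 2 + ‖projOp x s w‖ ^ 2 := by
  have hw : w = (w - projOp x s w) + projOp x s w := by abel
  calc ‖w‖ ^ 2 = ‖(w - projOp x s w) + projOp x s w‖ ^ 2 := by rw [← hw]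
    _ = ‖w - projOp x s w‖ ^ 2 + 2 * RCLike.re ⟪w - projOp x s w, projOp x s w⟫
        + ‖projOp x s w‖ ^ 2 := norm_add_sq _ _
    _ = ‖w - projOp x s w‖ ^ 2 + ‖projOp x s w‖ ^ 2 := by
        rw [projOp_inner_decomp h w, map_zero]
        ring

lemma norm_projOp_apply_le {x : ℕ → H} {s : Finset ℕ} (h : ONOn x s) (w : H) :
    ‖projOp x s w‖ ≤ ‖w‖ := by
  have h2 := norm_sq_decomp h w
  nlinarith [norm_nonneg (projOp x s w), norm_nonneg w, sq_nonneg (‖w - projOp x s w‖)]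

lemma norm_sub_projOp_apply_le {x : ℕ → H} {s : Finset ℕ} (h : ONOn x s) (w : H) :
    ‖w - projOp x s w‖ ≤ ‖w‖ := by
  have h2 := norm_sq_decomp h w
  nlinarith [norm_nonneg (w - projOp x s w), norm_nonneg w, sq_nonneg ‖projOp x s w‖]

lemma norm_projOp_le {x : ℕ → H} {s : Finset ℕ} (h : ONOn x s) : ‖projOp x s‖ ≤ 1 :=
  ContinuousLinearMap.opNorm_le_bound _ zero_le_one
    (fun w => by rw [one_mul]; exact norm_projOp_apply_le h w)

end S9

namespace S9
variable {H : Type} [NormedAddCommGroup H] [InnerProductSpace ℂ H] [CompleteSpace H]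

local notation "⟪" x ", " y "⟫" => @inner ℂ H _ x y

section greedy

variable (T : H →L[ℂ] H) (e : H)

noncomputable def xe (x : ℕ → H) : ℕ → H := fun i => if i = 0 then e else x (i - 1)

noncomputable def kop (x : ℕ → H) (j : ℕ) : H →L[ℂ] H :=
  projOp (xe e x) (Finset.range (j + 1))

noncomputable def Bop (x : ℕ → H) (j : ℕ) : H →L[ℂ] H := 1 - kop e x j

noncomputable def sval (x : ℕ → H) (j : ℕ) : ℝ := ‖T.comp (Bop e x j)‖

def famOK (ε : ℝ) (n : ℕ) (x : ℕ → H) : Prop :=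
  ONOn (xe e x) (Finset.range (n + 1)) ∧
  ∀ j, j < n → sval T e x j - ε ≤ ‖T (x j)‖

lemma Bop_apply (x : ℕ → H) (j : ℕ) (w : H) :
    Bop e x j w = w - projOp (xe e x) (Finset.range (j + 1)) w := by
  simp [Bop, kop, ContinuousLinearMap.sub_apply]

lemma inner_xe_Bop {x : ℕ → H} {j : ℕ} (hON : ONOn (xe e x) (Finset.range (j + 1)))
    {i : ℕ} (hi : i ∈ Finset.range (j + 1)) (w : H) :
    ⟪xe e x i, Bop e x j w⟫ = 0 := by
  rw [Bop_apply]
  exact inner_sub_projOp hON hi w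

lemma norm_Bop_apply_le {x : ℕ → H} {j : ℕ} (hON : ONOn (xe e x) (Finset.range (j + 1)))
    (w : H) : ‖Bop e x j w‖ ≤ ‖w‖ := by
  rw [Bop_apply]
  exact norm_sub_projOp_apply_le hON w

lemma norm_Bop_le {x : ℕ → H} {j : ℕ} (hON : ONOn (xe e x) (Finset.range (j + 1))) :
    ‖Bop e x j‖ ≤ 1 :=
  ContinuousLinearMap.opNorm_le_bound _ zero_le_one
    (fun w => by rw [one_mul]; exact norm_Bop_apply_le e hON w)

lemma Bop_fix {x : ℕ → H} {j : ℕ} {v : H}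
    (hv : ∀ i ∈ Finset.range (j + 1), ⟪xe e x i, v⟫ = 0) : Bop e x j v = v := by
  rw [Bop_apply, projOp_apply]
  have : ∑ i ∈ Finset.range (j + 1), ⟪xe e x i, v⟫ • xe e x i = 0 :=
    Finset.sum_eq_zero (fun i hi => by rw [hv i hi, zero_smul])
  rw [this, sub_zero]

lemma sval_anti {x : ℕ → H} {i j : ℕ} (hij : i ≤ j)
    (hON : ONOn (xe e x) (Finset.range (j + 1))) : sval T e x j ≤ sval T e x i := by
  have hONi : ONOn (xe e x) (Finset.range (i + 1)) :=
    hON.mono (Finset.range_subset_range.2 (by omega))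
  have hcomp : T.comp (Bop e x j) = (T.comp (Bop e x i)).comp (Bop e x j) := by
    ext w
    simp only [ContinuousLinearMap.comp_apply]
    congr 1
    refine (Bop_fix e (fun l hl => ?_)).symm
    exact inner_xe_Bop e hON (Finset.range_subset_range.2 (by omega) hl) w
  rw [sval, hcomp]
  calc ‖(T.comp (Bop e x i)).comp (Bop e x j)‖
      ≤ ‖T.comp (Bop e x i)‖ * ‖Bop e x j‖ := ContinuousLinearMap.opNorm_comp_le _ _
    _ ≤ ‖T.comp (Bop e x i)‖ * 1 :=
        mul_le_mul_of_nonneg_left (norm_Bop_le e hON) (norm_nonneg _)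
    _ = sval T e x i := by rw [mul_one, sval]

lemma sval_le (x : ℕ → H) {j : ℕ} (hON : ONOn (xe e x) (Finset.range (j + 1))) :
    sval T e x j ≤ ‖T‖ := by
  calc sval T e x j ≤ ‖T‖ * ‖Bop e x j‖ := ContinuousLinearMap.opNorm_comp_le _ _
    _ ≤ ‖T‖ * 1 := mul_le_mul_of_nonneg_left (norm_Bop_le e hON) (norm_nonneg _)
    _ = ‖T‖ := mul_one _

lemma sval_nonneg (x : ℕ → H) (j : ℕ) : 0 ≤ sval T e x j := norm_nonneg _

lemma xe_congr {x x' : ℕ → H} {n : ℕ} (h : ∀ i, i < n → x' i = x i) :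
    ∀ i, i ≤ n → xe e x' i = xe e x i := by
  intro i hi
  unfold xe
  by_cases h0 : i = 0
  · simp [h0]
  · simp only [h0, if_false]
    exact h (i - 1) (by omega)

lemma kop_congr {x x' : ℕ → H} {n : ℕ} (h : ∀ i, i < n → x' i = x i) {j : ℕ}
    (hj : j ≤ n) : kop e x' j = kop e x j := by
  unfold kop projOp
  refine Finset.sum_congr rfl (fun i hi => ?_)
  rw [xe_congr e h i (by simp at hi; omega)]

lemma sval_congr {x x' : ℕ → H} {n : ℕ} (h : ∀ i, i < n → x' i = x i) {j : ℕ}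
    (hj : j ≤ n) : sval T e x' j = sval T e x j := by
  unfold sval Bop
  rw [kop_congr e h hj]

end greedy
end S9

namespace S9
variable {H : Type} [NormedAddCommGroup H] [InnerProductSpace ℂ H] [CompleteSpace H]

local notation "⟪" x ", " y "⟫" => @inner ℂ H _ x y

lemma exists_Bop_ne_zero (hinf : ¬FiniteDimensional ℂ H) (e : H) (x : ℕ → H) (n : ℕ) :
    ∃ u : H, Bop e x n u ≠ 0 := by
  by_contra hall
  push_neg at hall
  have hk : (1 : H →L[ℂ] H) = kop e x n := by
    ext w
    have h2 : (1 : H →L[ℂ] H) w - kop e x n w = 0 := by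
      simpa [Bop, ContinuousLinearMap.sub_apply] using hall w
    exact sub_eq_zero.1 h2
  have hfr : FiniteRank (1 : H →L[ℂ] H) := hk ▸ finiteRank_projOp _ _
  unfold FiniteRank at hfr
  have htop : LinearMap.range ((1 : H →L[ℂ] H) : H →ₗ[ℂ] H) = ⊤ :=
    LinearMap.range_eq_top.2 (fun y => ⟨y, rfl⟩)
  rw [htop] at hfr
  haveI := hfr
  exact hinf (Module.Finite.equiv (Submodule.topEquiv))

lemma famOK_extend (T : H →L[ℂ] H) (e : H) (hinf : ¬FiniteDimensional ℂ H)
    (he : ‖e‖ = 1) {ε : ℝ} (hε : 0 < ε) (n : ℕ) (x : ℕ → H) (hx : famOK T e ε n x) :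
    ∃ x' : ℕ → H, (∀ i, i < n → x' i = x i) ∧ famOK T e ε (n + 1) x' := by
  obtain ⟨hON, htb⟩ := hx
  set s := sval T e x n with hs
  have hu : ∃ u : H, Bop e x n u ≠ 0 ∧ (s - ε) * ‖u‖ ≤ ‖T (Bop e x n u)‖ := by
    by_cases hcase : s ≤ ε
    · obtain ⟨u, hu⟩ := exists_Bop_ne_zero hinf e x n
      exact ⟨u, hu, le_trans
        (mul_nonpos_of_nonpos_of_nonneg (by linarith) (norm_nonneg u)) (norm_nonneg _)⟩
    · push_neg at hcase
      by_contra hall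
      push_neg at hall
      have hb : ∀ u : H, ‖(T.comp (Bop e x n)) u‖ ≤ (s - ε) * ‖u‖ := by
        intro u
        by_cases h0 : Bop e x n u = 0
        · rw [ContinuousLinearMap.comp_apply, h0, map_zero, norm_zero]
          exact mul_nonneg (by linarith) (norm_nonneg u)
        · exact le_of_lt (by simpa [ContinuousLinearMap.comp_apply] using hall u h0)
      have : s ≤ s - ε := by
        rw [hs]
        exact ContinuousLinearMap.opNorm_le_bound _ (by linarith) hb
      linarith
  obtain ⟨u, hBu, hTu⟩ := hu
  set c := ‖Bop e x n u‖ with hc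
  have hc0 : 0 < c := norm_pos_iff.2 hBu
  set xn := ((c : ℂ))⁻¹ • Bop e x n u with hxn
  have hxn_norm : ‖xn‖ = 1 := by
    rw [hxn, norm_smul, norm_inv]
    have : ‖((c : ℝ) : ℂ)‖ = c := by
      rw [Complex.norm_real, Real.norm_eq_abs, abs_of_pos hc0]
    rw [this, ← hc, inv_mul_cancel₀ hc0.ne']
  have hxn_orth : ∀ i ∈ Finset.range (n + 1), ⟪xe e x i, xn⟫ = 0 := by
    intro i hi
    rw [hxn, inner_smul_right, inner_xe_Bop e hON hi, mul_zero]
  have hTxn : s - ε ≤ ‖T xn‖ := by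
    have hTxe : ‖T xn‖ = c⁻¹ * ‖T (Bop e x n u)‖ := by
      rw [hxn, map_smul, norm_smul, norm_inv]
      congr 2
      rw [Complex.norm_real, Real.norm_eq_abs, abs_of_pos hc0]
    by_cases hse : s - ε ≤ 0
    · exact le_trans hse (norm_nonneg _)
    · push_neg at hse
      have hcu : c ≤ ‖u‖ := by rw [hc]; exact norm_Bop_apply_le e hON u
      rw [hTxe]
      calc s - ε = (s - ε) * (c⁻¹ * c) := by rw [inv_mul_cancel₀ hc0.ne', mul_one]
        _ ≤ (s - ε) * (c⁻¹ * ‖u‖) := by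
            refine mul_le_mul_of_nonneg_left ?_ (le_of_lt hse)
            exact mul_le_mul_of_nonneg_left hcu (inv_nonneg.2 hc0.le)
        _ = c⁻¹ * ((s - ε) * ‖u‖) := by ring
        _ ≤ c⁻¹ * ‖T (Bop e x n u)‖ :=
            mul_le_mul_of_nonneg_left hTu (inv_nonneg.2 hc0.le)
  refine ⟨Function.update x n xn, fun i hi => Function.update_of_ne (by omega) _ _, ?_, ?_⟩
  · -- ONOn on range (n+2)
    have hagree : ∀ i, i < n → Function.update x n xn i = x i :=
      fun i hi => Function.update_of_ne (by omega) _ _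
    have hxe_eq : ∀ i, i ≤ n → xe e (Function.update x n xn) i = xe e x i :=
      xe_congr e hagree
    have hxe_new : xe e (Function.update x n xn) (n + 1) = xn := by
      unfold xe
      simp
    constructor
    · intro i hi
      rw [Finset.mem_range] at hi
      by_cases hin : i ≤ n
      · rw [hxe_eq i hin]; exact hON.1 i (Finset.mem_range.2 (by omega))
      · have : i = n + 1 := by omega
        rw [this, hxe_new]; exact hxn_norm
    · intro i hi j hj hij
      rw [Finset.mem_range] at hi hj
      by_cases hin : i ≤ n <;> by_cases hjn : j ≤ n
      · rw [hxe_eq i hin, hxe_eq j hjn]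
        exact hON.2 i (Finset.mem_range.2 (by omega)) j (Finset.mem_range.2 (by omega)) hij
      · have hj1 : j = n + 1 := by omega
        rw [hxe_eq i hin, hj1, hxe_new]
        exact hxn_orth i (Finset.mem_range.2 (by omega))
      · have hi1 : i = n + 1 := by omega
        rw [hxe_eq j hjn, hi1, hxe_new, ← inner_conj_symm,
          hxn_orth j (Finset.mem_range.2 (by omega)), map_zero]
      · omega
  · -- the norm lower bounds
    intro j hj
    have hagree : ∀ i, i < n → Function.update x n xn i = x i :=
      fun i hi => Function.update_of_ne (by omega) _ _
    by_cases hjn : j < n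
    · rw [sval_congr T e hagree (by omega : j ≤ n), Function.update_of_ne (by omega)]
      exact htb j hjn
    · have : j = n := by omega
      rw [this, sval_congr T e hagree (le_refl n), Function.update_self]
      exact hTxn

lemma famOK_exists (T : H →L[ℂ] H) (e : H) (hinf : ¬FiniteDimensional ℂ H)
    (he : ‖e‖ = 1) {ε : ℝ} (hε : 0 < ε) : ∀ n, ∃ x : ℕ → H, famOK T e ε n x := by
  intro n
  induction n with
  | zero =>
      refine ⟨fun _ => 0, ⟨?_, ?_⟩, ?_⟩
      · intro i hi
        rw [Finset.mem_range] at hi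
        have : i = 0 := by omega
        rw [this]
        simpa [xe] using he
      · intro i hi j hj hij
        rw [Finset.mem_range] at hi hj
        omega
      · intro j hj
        omega
  | succ n ih =>
      obtain ⟨x, hx⟩ := ih
      obtain ⟨x', -, h⟩ := famOK_extend T e hinf he hε n x hx
      exact ⟨x', h⟩

end S9

namespace S9
variable {H : Type} [NormedAddCommGroup H] [InnerProductSpace ℂ H] [CompleteSpace H]

local notation "⟪" x ", " y "⟫" => @inner ℂ H _ x y

lemma xe_succ (e : H) (x : ℕ → H) (k : ℕ) : xe e x (k + 1) = x k := by simp [xe]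

lemma famOK_unit {T : H →L[ℂ] H} {e : H} {ε : ℝ} {n : ℕ} {x : ℕ → H}
    (hfam : famOK T e ε n x) {i : ℕ} (hi : i < n) : ‖x i‖ = 1 := by
  have := hfam.1.1 (i + 1) (Finset.mem_range.2 (by omega))
  rwa [xe_succ] at this

lemma famOK_inner_eq_zero {T : H →L[ℂ] H} {e : H} {ε : ℝ} {n : ℕ} {x : ℕ → H}
    (hfam : famOK T e ε n x) {i j : ℕ} (hij : i ≠ j) (hi : i < n) (hj : j < n) :
    ⟪x i, x j⟫ = 0 := by
  have := hfam.1.2 (i + 1) (Finset.mem_range.2 (by omega)) (j + 1)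
    (Finset.mem_range.2 (by omega)) (by omega)
  rwa [xe_succ, xe_succ] at this

lemma famOK_Bop_fix {T : H →L[ℂ] H} {e : H} {ε : ℝ} {n : ℕ} {x : ℕ → H}
    (hfam : famOK T e ε n x) {i k : ℕ} (hik : i ≤ k) (hkn : k < n) :
    Bop e x i (x k) = x k := by
  refine Bop_fix e (fun l hl => ?_)
  rw [Finset.mem_range] at hl
  have h1 := hfam.1.2 l (Finset.mem_range.2 (by omega)) (k + 1)
    (Finset.mem_range.2 (by omega)) (by omega)
  rwa [xe_succ] at h1

set_option maxHeartbeats 1000000 in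
lemma near_orth (T : H →L[ℂ] H) (e : H) {ε : ℝ} {n : ℕ} {x : ℕ → H}
    (hε : 0 < ε) (hfam : famOK T e ε n x) {i j : ℕ} (hij : i < j) (hjn : j < n) :
    ‖⟪T (x i), T (x j)⟫‖ ≤ Real.sqrt ε * (‖T‖ + 1) ^ 2 := by
  obtain ⟨hON, htb⟩ := hfam
  have hONi : ONOn (xe e x) (Finset.range (i + 1)) :=
    hON.mono (Finset.range_subset_range.2 (by omega))
  have hin : i < n := lt_trans hij hjn
  have hxi_unit : ‖x i‖ = 1 := famOK_unit ⟨hON, htb⟩ hin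
  have hxj_unit : ‖x j‖ = 1 := famOK_unit ⟨hON, htb⟩ hjn
  have hTB : ∀ w, ‖T (Bop e x i w)‖ ≤ sval T e x i * ‖w‖ := by
    intro w
    have := (T.comp (Bop e x i)).le_opNorm w
    simpa [ContinuousLinearMap.comp_apply, sval] using this
  set K := ‖T‖ with hKdef
  set si := sval T e x i with hsidef
  set ti := ‖T (x i)‖ with htidef
  set tj := ‖T (x j)‖ with htjdef
  have hsiK : si ≤ K := sval_le T e x hONi
  have hti : si - ε ≤ ti := htb i hin
  have htj : tj ≤ si := by
    have h1 : T (x j) = T (Bop e x i (x j)) := by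
      rw [famOK_Bop_fix ⟨hON, htb⟩ hij.le hjn]
    calc tj = ‖T (Bop e x i (x j))‖ := by rw [htjdef, h1]
      _ ≤ si * ‖x j‖ := hTB (x j)
      _ = si := by rw [hxj_unit, mul_one]
  have hK0 : (0 : ℝ) ≤ K := norm_nonneg T
  have hsi0 : (0 : ℝ) ≤ si := norm_nonneg _
  have hti0 : (0 : ℝ) ≤ ti := norm_nonneg _
  have htj0 : (0 : ℝ) ≤ tj := norm_nonneg _
  have hsub : si ^ 2 - ti ^ 2 ≤ 2 * ε * K := by
    by_cases hc : si ≤ ε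
    · nlinarith
    · push_neg at hc
      nlinarith
  set Z := ⟪T (x i), T (x j)⟫ with hZdef
  by_cases hZ0 : Z = 0
  · rw [hZ0, norm_zero]
    positivity
  · set σ := ((‖Z‖ : ℝ) : ℂ) / Z with hσdef
    have hZn0 : (‖Z‖ : ℝ) ≠ 0 := norm_ne_zero_iff.2 hZ0
    have hZc0 : ((‖Z‖ : ℝ) : ℂ) ≠ 0 := by exact_mod_cast hZn0
    have hσZ : σ * Z = ((‖Z‖ : ℝ) : ℂ) := by
      rw [hσdef, div_mul_cancel₀ _ hZ0]
    have hσn : ‖σ‖ = 1 := by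
      rw [hσdef, norm_div, Complex.norm_real, Real.norm_eq_abs,
        abs_of_nonneg (norm_nonneg Z), div_self hZn0]
    set t := Real.sqrt ε with htdef
    have ht0 : 0 < t := Real.sqrt_pos.2 hε
    have htsq : t ^ 2 = ε := Real.sq_sqrt hε.le
    have hnormco : ‖((t : ℝ) : ℂ) * σ‖ = t := by
      rw [norm_mul, hσn, mul_one, Complex.norm_real, Real.norm_eq_abs, abs_of_pos ht0]
    set w := x i + (((t : ℝ) : ℂ) * σ) • x j with hwdef
    have hxij : ⟪x i, x j⟫ = 0 := famOK_inner_eq_zero ⟨hON, htb⟩ (by omega) hin hjn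
    have hwsq : ‖w‖ ^ 2 = 1 + t ^ 2 := by
      rw [hwdef, norm_add_sq (𝕜 := ℂ), inner_smul_right, hxij, mul_zero, map_zero,
        norm_smul, hnormco, hxi_unit, hxj_unit]
      ring
    have hwfix : Bop e x i w = w := by
      rw [hwdef, map_add, map_smul, famOK_Bop_fix ⟨hON, htb⟩ le_rfl hin,
        famOK_Bop_fix ⟨hON, htb⟩ hij.le hjn]
    have hTws : ‖T w‖ ^ 2 ≤ si ^ 2 * (1 + t ^ 2) := by
      have h1 : ‖T w‖ ≤ si * ‖w‖ := by
        have h2 := hTB w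
        rwa [hwfix] at h2
      nlinarith [norm_nonneg (T w), norm_nonneg w, hwsq, hsi0]
    have hTwexp : ‖T w‖ ^ 2 = ti ^ 2 + 2 * (t * ‖Z‖) + t ^ 2 * tj ^ 2 := by
      rw [hwdef, map_add, map_smul, norm_add_sq (𝕜 := ℂ), inner_smul_right]
      rw [← hZdef, mul_assoc, hσZ, ← Complex.ofReal_mul, norm_smul, hnormco]
      simp only [RCLike.re_to_complex, Complex.ofReal_re]
      ring
    have hcomb : ti ^ 2 + 2 * (t * ‖Z‖) + t ^ 2 * tj ^ 2 ≤ si ^ 2 * (1 + t ^ 2) := by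
      rw [← hTwexp]; exact hTws
    have hsiKsq : si ^ 2 ≤ K ^ 2 := by nlinarith
    have htjsq : (0 : ℝ) ≤ t ^ 2 * tj ^ 2 := by positivity
    have hexp : si ^ 2 * (1 + t ^ 2) = si ^ 2 + t ^ 2 * si ^ 2 := by ring
    have step1 : 2 * (t * ‖Z‖) ≤ (si ^ 2 - ti ^ 2) + t ^ 2 * si ^ 2 := by
      linarith [hcomb, htjsq, hexp.le, hexp.ge]
    have step2 : t ^ 2 * si ^ 2 ≤ ε * K ^ 2 := by
      rw [htsq]
      exact mul_le_mul_of_nonneg_left hsiKsq hε.le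
    have hmain : 2 * (t * ‖Z‖) ≤ 2 * ε * K + ε * K ^ 2 := by linarith [hsub, step1, step2]
    have h2t : (0 : ℝ) < 2 * t := by linarith
    have htt : t * t = ε := by rw [htdef]; exact Real.mul_self_sqrt hε.le
    have hq : 2 * K + K ^ 2 ≤ 2 * (K + 1) ^ 2 := by
      have hqe : 2 * (K + 1) ^ 2 = 2 * K ^ 2 + 4 * K + 2 := by ring
      linarith [sq_nonneg K]
    have hq2 : ε * (2 * K + K ^ 2) ≤ ε * (2 * (K + 1) ^ 2) :=
      mul_le_mul_of_nonneg_left hq hε.le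
    have hmain' : (2 * t) * ‖Z‖ ≤ (2 * t) * (t * (K + 1) ^ 2) := by
      calc (2 * t) * ‖Z‖ = 2 * (t * ‖Z‖) := by ring
        _ ≤ 2 * ε * K + ε * K ^ 2 := hmain
        _ = ε * (2 * K + K ^ 2) := by ring
        _ ≤ ε * (2 * (K + 1) ^ 2) := hq2
        _ = (t * t) * (2 * (K + 1) ^ 2) := by rw [htt]
        _ = (2 * t) * (t * (K + 1) ^ 2) := by ring
    exact (mul_le_mul_iff_right₀ h2t).1 hmain'

end S9

namespace S9
variable {H : Type} [NormedAddCommGroup H] [InnerProductSpace ℂ H] [CompleteSpace H]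

local notation "⟪" x ", " y "⟫" => @inner ℂ H _ x y

noncomputable def combo (x : ℕ → H) (m : ℕ) : (Fin m → ℂ) →ₗ[ℂ] H where
  toFun := fun c => ∑ i : Fin m, c i • x i
  map_add' := by
    intro a b
    simp [add_smul, Finset.sum_add_distrib]
  map_smul' := by
    intro m a
    simp [smul_smul, Finset.smul_sum]

lemma combo_apply (x : ℕ → H) (m : ℕ) (c : Fin m → ℂ) :
    combo x m c = ∑ i : Fin m, c i • x i := rfl

lemma exists_kernel_combo (x : ℕ → H) {j : ℕ} (F : H →L[ℂ] H)
    (hF : Module.rank ℂ (LinearMap.range (F : H →ₗ[ℂ] H)) ≤ j) :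
    ∃ c : ℕ → ℂ, (∑ i ∈ Finset.range (j + 1), ‖c i‖ ^ 2 = 1) ∧
      F (∑ i ∈ Finset.range (j + 1), c i • x i) = 0 := by
  classical
  have hker : ∃ c : Fin (j + 1) → ℂ, c ≠ 0 ∧ F (combo x (j + 1) c) = 0 := by
    by_contra hcon
    push_neg at hcon
    have hinj : Function.Injective ((F : H →ₗ[ℂ] H).comp (combo x (j + 1))) := by
      rw [← LinearMap.ker_eq_bot, Submodule.eq_bot_iff]
      intro c hc
      by_contra hc0
      exact absurd hc (hcon c hc0)
    have hrange : ∀ c, ((F : H →ₗ[ℂ] H).comp (combo x (j + 1))) c ∈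
        LinearMap.range (F : H →ₗ[ℂ] H) := fun c => ⟨combo x (j + 1) c, rfl⟩
    have hinj' : Function.Injective
        (((F : H →ₗ[ℂ] H).comp (combo x (j + 1))).codRestrict _ hrange) := by
      intro a b hab
      exact hinj (congrArg Subtype.val hab)
    have hrank := LinearMap.rank_le_of_injective _ hinj'
    rw [rank_fin_fun] at hrank
    have h2 : ((j + 1 : ℕ) : Cardinal) ≤ ((j : ℕ) : Cardinal) := le_trans hrank hF
    have := Nat.cast_le.1 h2
    omega
  obtain ⟨c, hc0, hcL⟩ := hker
  have hSpos : 0 < ∑ i : Fin (j + 1), ‖c i‖ ^ 2 := by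
    rcases Function.ne_iff.1 hc0 with ⟨i, hi⟩
    have hcine : c i ≠ 0 := by simpa using hi
    exact Finset.sum_pos' (fun l _ => by positivity)
      ⟨i, Finset.mem_univ i, pow_pos (norm_pos_iff.2 hcine) 2⟩
  obtain ⟨S, hSeq⟩ : ∃ S : ℝ, S = ∑ i : Fin (j + 1), ‖c i‖ ^ 2 := ⟨_, rfl⟩
  rw [← hSeq] at hSpos
  have hdn : ‖(((Real.sqrt S)⁻¹ : ℝ) : ℂ)‖ = (Real.sqrt S)⁻¹ := by
    rw [Complex.norm_real, Real.norm_eq_abs,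
      abs_of_nonneg (inv_nonneg.2 (Real.sqrt_nonneg S))]
  refine ⟨fun i => if h : i < j + 1 then (((Real.sqrt S)⁻¹ : ℝ) : ℂ) * c ⟨i, h⟩ else 0, ?_, ?_⟩
  · have hsum1 : ∑ i ∈ Finset.range (j + 1),
        ‖(fun i => if h : i < j + 1 then (((Real.sqrt S)⁻¹ : ℝ) : ℂ) * c ⟨i, h⟩ else 0) i‖ ^ 2
        = ∑ i : Fin (j + 1), ‖(((Real.sqrt S)⁻¹ : ℝ) : ℂ) * c i‖ ^ 2 := by
      rw [Finset.sum_range]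
      refine Finset.sum_congr rfl (fun i _ => ?_)
      simp [Fin.is_le]
    rw [hsum1]
    have hterm : ∀ i : Fin (j + 1),
        ‖(((Real.sqrt S)⁻¹ : ℝ) : ℂ) * c i‖ ^ 2 = S⁻¹ * ‖c i‖ ^ 2 := fun i => by
      rw [norm_mul, mul_pow, hdn, ← Real.sqrt_inv, Real.sq_sqrt (inv_nonneg.2 hSpos.le)]
    rw [Finset.sum_congr rfl (fun i _ => hterm i), ← Finset.mul_sum, ← hSeq,
      inv_mul_cancel₀ hSpos.ne']
  · have hsum2 : ∑ i ∈ Finset.range (j + 1),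
        (fun i => if h : i < j + 1 then (((Real.sqrt S)⁻¹ : ℝ) : ℂ) * c ⟨i, h⟩ else 0) i • x i
        = (((Real.sqrt S)⁻¹ : ℝ) : ℂ) • ∑ i : Fin (j + 1), c i • x i := by
      rw [Finset.sum_range, Finset.smul_sum]
      refine Finset.sum_congr rfl (fun i _ => ?_)
      simp [smul_smul, Fin.is_le]
    rw [hsum2, map_smul]
    have hF0 : F (∑ i : Fin (j + 1), c i • x i) = 0 := hcL
    rw [hF0, smul_zero]

end S9

namespace S9
variable {H : Type} [NormedAddCommGroup H] [InnerProductSpace ℂ H] [CompleteSpace H]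

local notation "⟪" x ", " y "⟫" => @inner ℂ H _ x y

lemma projOp_fix_span {x : ℕ → H} {s t : Finset ℕ} (hON : ONOn x t) (hst : s ⊆ t)
    (c : ℕ → ℂ) : projOp x t (∑ i ∈ s, c i • x i) = ∑ i ∈ s, c i • x i := by
  classical
  rw [projOp_apply]
  have hcoef : ∀ l ∈ t, ⟪x l, ∑ i ∈ s, c i • x i⟫ = if l ∈ s then c l else 0 := by
    intro l hl
    rw [inner_sum]
    by_cases hls : l ∈ s
    · rw [if_pos hls, Finset.sum_eq_single l]
      · rw [inner_smul_right, hON.inner_self hl, mul_one]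
      · intro j hj hjl
        rw [inner_smul_right, hON.2 l hl j (hst hj) (Ne.symm hjl), mul_zero]
      · intro h
        exact absurd hls h
    · rw [if_neg hls]
      refine Finset.sum_eq_zero (fun j hj => ?_)
      have hjl : l ≠ j := fun h => hls (h ▸ hj)
      rw [inner_smul_right, hON.2 l hl j (hst hj) hjl, mul_zero]
  calc ∑ l ∈ t, ⟪x l, ∑ i ∈ s, c i • x i⟫ • x l
      = ∑ l ∈ t, (if l ∈ s then c l • x l else 0) := by
        refine Finset.sum_congr rfl (fun l hl => ?_)
        rw [hcoef l hl, ite_smul, zero_smul]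
    _ = ∑ l ∈ t ∩ s, c l • x l := Finset.sum_ite_mem t s _
    _ = ∑ i ∈ s, c i • x i := by rw [Finset.inter_eq_right.2 hst]

set_option maxHeartbeats 1000000 in
lemma span_lower (T : H →L[ℂ] H) (e : H) {ε : ℝ} {n : ℕ} {x : ℕ → H}
    (hε : 0 < ε) (hfam : famOK T e ε n x) {j : ℕ} (hjn : j < n) (c : ℕ → ℂ)
    (hc : ∑ i ∈ Finset.range (j + 1), ‖c i‖ ^ 2 = 1) :
    (max (sval T e x j - ε) 0) ^ 2 - (j + 1) * (Real.sqrt ε * (‖T‖ + 1) ^ 2)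
      ≤ ‖T (∑ i ∈ Finset.range (j + 1), c i • x i)‖ ^ 2 := by
  classical
  have hONj : ONOn (xe e x) (Finset.range (j + 1)) :=
    hfam.1.mono (Finset.range_subset_range.2 (by omega))
  have hη0 : 0 ≤ Real.sqrt ε * (‖T‖ + 1) ^ 2 := by positivity
  have hm0 : 0 ≤ max (sval T e x j - ε) 0 := le_max_right _ _
  have hm : ∀ i ∈ Finset.range (j + 1), max (sval T e x j - ε) 0 ≤ ‖T (x i)‖ := by
    intro i hi
    rw [Finset.mem_range] at hi
    have hONi : ONOn (xe e x) (Finset.range (i + 1)) :=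
      hfam.1.mono (Finset.range_subset_range.2 (by omega))
    have h1 : sval T e x j ≤ sval T e x i := sval_anti T e (by omega) hONj
    have h2 : sval T e x i - ε ≤ ‖T (x i)‖ := hfam.2 i (by omega)
    exact max_le (by linarith) (norm_nonneg _)
  have hTv : T (∑ i ∈ Finset.range (j + 1), c i • x i)
      = ∑ i ∈ Finset.range (j + 1), c i • T (x i) := by
    rw [map_sum]
    exact Finset.sum_congr rfl (fun i _ => T.map_smul (c i) (x i))
  rw [hTv]
  set v := ∑ i ∈ Finset.range (j + 1), c i • T (x i) with hv
  have h1 : ‖v‖ ^ 2 = RCLike.re ⟪v, v⟫ := (inner_self_eq_norm_sq v).symm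
  have h2 : ⟪v, v⟫ = ∑ i ∈ Finset.range (j + 1), ∑ l ∈ Finset.range (j + 1),
      ((starRingEnd ℂ) (c i) * c l) * ⟪T (x i), T (x l)⟫ := by
    rw [hv, sum_inner]
    refine Finset.sum_congr rfl (fun i _ => ?_)
    rw [inner_smul_left, inner_sum, Finset.mul_sum]
    refine Finset.sum_congr rfl (fun l _ => ?_)
    rw [inner_smul_right]
    ring
  have h3 : ‖v‖ ^ 2 = ∑ i ∈ Finset.range (j + 1), ∑ l ∈ Finset.range (j + 1),
      RCLike.re (((starRingEnd ℂ) (c i) * c l) * ⟪T (x i), T (x l)⟫) := by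
    rw [h1, h2, map_sum]
    exact Finset.sum_congr rfl (fun i _ => map_sum _ _ _)
  have hdiag : ∀ i ∈ Finset.range (j + 1),
      RCLike.re (((starRingEnd ℂ) (c i) * c i) * ⟪T (x i), T (x i)⟫)
        = ‖c i‖ ^ 2 * ‖T (x i)‖ ^ 2 := by
    intro i _
    have : ((starRingEnd ℂ) (c i) * c i) * ⟪T (x i), T (x i)⟫
        = ((‖c i‖ ^ 2 * ‖T (x i)‖ ^ 2 : ℝ) : ℂ) := by
      rw [RCLike.conj_mul, inner_self_eq_norm_sq_to_K]
      push_cast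
      norm_cast
    rw [this]
    simp only [RCLike.re_to_complex, Complex.ofReal_re]
  have hoffb : ∀ i ∈ Finset.range (j + 1), ∀ l ∈ (Finset.range (j + 1)).erase i,
      -(‖c i‖ * ‖c l‖ * (Real.sqrt ε * (‖T‖ + 1) ^ 2))
        ≤ RCLike.re (((starRingEnd ℂ) (c i) * c l) * ⟪T (x i), T (x l)⟫) := by
    intro i hi l hl
    rw [Finset.mem_range] at hi
    have hli := Finset.mem_of_mem_erase hl
    rw [Finset.mem_range] at hli
    have hne : l ≠ i := Finset.ne_of_mem_erase hl
    have hZb : ‖⟪T (x i), T (x l)⟫‖ ≤ Real.sqrt ε * (‖T‖ + 1) ^ 2 := by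
      rcases lt_or_gt_of_ne (Ne.symm hne) with hil | hil
      · exact near_orth T e hε hfam hil (by omega)
      · have := near_orth T e hε hfam hil (by omega)
        rwa [← inner_conj_symm, RCLike.norm_conj] at this
    have habs : ‖((starRingEnd ℂ) (c i) * c l) * ⟪T (x i), T (x l)⟫‖
        ≤ ‖c i‖ * ‖c l‖ * (Real.sqrt ε * (‖T‖ + 1) ^ 2) := by
      rw [norm_mul, norm_mul, RCLike.norm_conj]
      exact mul_le_mul_of_nonneg_left hZb (by positivity)
    have hre := RCLike.abs_re_le_norm (((starRingEnd ℂ) (c i) * c l) * ⟪T (x i), T (x l)⟫)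
    have := neg_abs_le (RCLike.re (((starRingEnd ℂ) (c i) * c l) * ⟪T (x i), T (x l)⟫))
    linarith [abs_nonneg (RCLike.re (((starRingEnd ℂ) (c i) * c l) * ⟪T (x i), T (x l)⟫))]
  -- split diagonal and offdiagonal
  have hsplit : ‖v‖ ^ 2 = (∑ i ∈ Finset.range (j + 1), ‖c i‖ ^ 2 * ‖T (x i)‖ ^ 2)
      + ∑ i ∈ Finset.range (j + 1), ∑ l ∈ (Finset.range (j + 1)).erase i,
        RCLike.re (((starRingEnd ℂ) (c i) * c l) * ⟪T (x i), T (x l)⟫) := by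
    rw [h3, ← Finset.sum_add_distrib]
    refine Finset.sum_congr rfl (fun i hi => ?_)
    rw [← hdiag i hi]
    exact (Finset.add_sum_erase _ _ hi).symm
  have hdsum : max (sval T e x j - ε) 0 ^ 2 ≤
      ∑ i ∈ Finset.range (j + 1), ‖c i‖ ^ 2 * ‖T (x i)‖ ^ 2 := by
    calc max (sval T e x j - ε) 0 ^ 2
        = (∑ i ∈ Finset.range (j + 1), ‖c i‖ ^ 2) * max (sval T e x j - ε) 0 ^ 2 := by
          rw [hc, one_mul]
      _ = ∑ i ∈ Finset.range (j + 1), ‖c i‖ ^ 2 * max (sval T e x j - ε) 0 ^ 2 := by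
          rw [Finset.sum_mul]
      _ ≤ ∑ i ∈ Finset.range (j + 1), ‖c i‖ ^ 2 * ‖T (x i)‖ ^ 2 := by
          refine Finset.sum_le_sum (fun i hi => ?_)
          refine mul_le_mul_of_nonneg_left ?_ (by positivity)
          exact pow_le_pow_left₀ hm0 (hm i hi) 2
  have hosum : -((j + 1) * (Real.sqrt ε * (‖T‖ + 1) ^ 2)) ≤
      ∑ i ∈ Finset.range (j + 1), ∑ l ∈ (Finset.range (j + 1)).erase i,
        RCLike.re (((starRingEnd ℂ) (c i) * c l) * ⟪T (x i), T (x l)⟫) := by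
    have hstep1 : ∑ i ∈ Finset.range (j + 1),
        ∑ l ∈ (Finset.range (j + 1)).erase i,
          (-(‖c i‖ * ‖c l‖ * (Real.sqrt ε * (‖T‖ + 1) ^ 2)))
        ≤ ∑ i ∈ Finset.range (j + 1), ∑ l ∈ (Finset.range (j + 1)).erase i,
          RCLike.re (((starRingEnd ℂ) (c i) * c l) * ⟪T (x i), T (x l)⟫) := by
      refine Finset.sum_le_sum (fun i hi => Finset.sum_le_sum (fun l hl => hoffb i hi l hl))
    refine le_trans ?_ hstep1
    rw [show ∑ i ∈ Finset.range (j + 1), ∑ l ∈ (Finset.range (j + 1)).erase i,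
        (-(‖c i‖ * ‖c l‖ * (Real.sqrt ε * (‖T‖ + 1) ^ 2)))
        = -((Real.sqrt ε * (‖T‖ + 1) ^ 2) * ∑ i ∈ Finset.range (j + 1),
            ∑ l ∈ (Finset.range (j + 1)).erase i, ‖c i‖ * ‖c l‖) by
      rw [Finset.mul_sum, ← Finset.sum_neg_distrib]
      refine Finset.sum_congr rfl (fun i _ => ?_)
      rw [Finset.mul_sum, ← Finset.sum_neg_distrib]
      refine Finset.sum_congr rfl (fun l _ => by ring)]
    rw [neg_le_neg_iff]
    have hsub : ∑ i ∈ Finset.range (j + 1), ∑ l ∈ (Finset.range (j + 1)).erase i,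
        ‖c i‖ * ‖c l‖ ≤ ∑ i ∈ Finset.range (j + 1), ∑ l ∈ Finset.range (j + 1),
        ‖c i‖ * ‖c l‖ := by
      refine Finset.sum_le_sum (fun i hi => ?_)
      refine Finset.sum_le_sum_of_subset_of_nonneg (Finset.erase_subset _ _)
        (fun l _ _ => by positivity)
    have hcs : ∑ i ∈ Finset.range (j + 1), ∑ l ∈ Finset.range (j + 1), ‖c i‖ * ‖c l‖
        ≤ (j + 1 : ℝ) := by
      rw [← Finset.sum_mul_sum]
      have := sq_sum_le_card_mul_sum_sq (s := Finset.range (j + 1)) (f := fun i => ‖c i‖)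
      rw [hc, mul_one, Finset.card_range] at this
      calc (∑ i ∈ Finset.range (j + 1), ‖c i‖) * (∑ l ∈ Finset.range (j + 1), ‖c l‖)
          = (∑ i ∈ Finset.range (j + 1), ‖c i‖) ^ 2 := by ring
        _ ≤ ((j + 1 : ℕ) : ℝ) := this
        _ = (j + 1 : ℝ) := by push_cast; ring
    calc (Real.sqrt ε * (‖T‖ + 1) ^ 2) * ∑ i ∈ Finset.range (j + 1),
          ∑ l ∈ (Finset.range (j + 1)).erase i, ‖c i‖ * ‖c l‖
        ≤ (Real.sqrt ε * (‖T‖ + 1) ^ 2) * ((j + 1 : ℝ)) := by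
          refine mul_le_mul_of_nonneg_left (le_trans hsub hcs) hη0
      _ = (j + 1) * (Real.sqrt ε * (‖T‖ + 1) ^ 2) := by ring
  linarith [hsplit, hdsum, hosum]

end S9

namespace S9
variable {H : Type} [NormedAddCommGroup H] [InnerProductSpace ℂ H] [CompleteSpace H]

local notation "⟪" x ", " y "⟫" => @inner ℂ H _ x y

lemma xe_zero (e : H) (x : ℕ → H) : xe e x 0 = e := by simp [xe]

lemma famOK_ONx {T : H →L[ℂ] H} {e : H} {ε : ℝ} {n : ℕ} {x : ℕ → H}
    (hfam : famOK T e ε n x) : ONOn x (Finset.range n) :=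
  ⟨fun i hi => famOK_unit hfam (Finset.mem_range.1 hi),
   fun i hi j hj hij => famOK_inner_eq_zero hfam hij (Finset.mem_range.1 hi)
     (Finset.mem_range.1 hj)⟩

lemma famOK_e_perp {T : H →L[ℂ] H} {e : H} {ε : ℝ} {n : ℕ} {x : ℕ → H}
    (hfam : famOK T e ε n x) {i : ℕ} (hi : i < n) : ⟪e, x i⟫ = 0 := by
  have := hfam.1.2 0 (Finset.mem_range.2 (by omega)) (i + 1)
    (Finset.mem_range.2 (by omega)) (by omega)
  rwa [xe_zero, xe_succ] at this

lemma bernstein (T : H →L[ℂ] H) (e : H) {ε : ℝ} {n : ℕ} {x : ℕ → H}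
    (hε : 0 < ε) (hfam : famOK T e ε n x) {j : ℕ} (hjn : j < n) :
    Real.sqrt (max 0 ((max (sval T e x j - ε) 0) ^ 2
        - (j + 1) * (Real.sqrt ε * (‖T‖ + 1) ^ 2)))
      ≤ approxNum (T.comp (projOp x (Finset.range n))) j := by
  refine le_approxNum _ _ _ (fun F hF => ?_)
  obtain ⟨c, hc1, hcF⟩ := exists_kernel_combo x F hF
  have hONx : ONOn x (Finset.range n) := famOK_ONx hfam
  have hONxj : ONOn x (Finset.range (j + 1)) :=
    hONx.mono (Finset.range_subset_range.2 (by omega))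
  have hvnorm : ‖∑ i ∈ Finset.range (j + 1), c i • x i‖ = 1 := by
    have h2 := on_norm_sum_sq hONxj c
    rw [hc1] at h2
    nlinarith [norm_nonneg (∑ i ∈ Finset.range (j + 1), c i • x i)]
  have hqv : projOp x (Finset.range n) (∑ i ∈ Finset.range (j + 1), c i • x i)
      = ∑ i ∈ Finset.range (j + 1), c i • x i :=
    projOp_fix_span hONx (Finset.range_subset_range.2 (by omega)) c
  have h1 : ‖T (∑ i ∈ Finset.range (j + 1), c i • x i)‖
      ≤ ‖T.comp (projOp x (Finset.range n)) - F‖ := by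
    calc ‖T (∑ i ∈ Finset.range (j + 1), c i • x i)‖
        = ‖(T.comp (projOp x (Finset.range n)) - F)
            (∑ i ∈ Finset.range (j + 1), c i • x i)‖ := by
          rw [ContinuousLinearMap.sub_apply, ContinuousLinearMap.comp_apply, hqv, hcF,
            sub_zero]
      _ ≤ ‖T.comp (projOp x (Finset.range n)) - F‖
            * ‖∑ i ∈ Finset.range (j + 1), c i • x i‖ :=
          ContinuousLinearMap.le_opNorm _ _
      _ = ‖T.comp (projOp x (Finset.range n)) - F‖ := by rw [hvnorm, mul_one]
  have h2 : Real.sqrt (max 0 ((max (sval T e x j - ε) 0) ^ 2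
      - (j + 1) * (Real.sqrt ε * (‖T‖ + 1) ^ 2)))
      ≤ ‖T (∑ i ∈ Finset.range (j + 1), c i • x i)‖ := by
    have hsl := span_lower T e hε hfam hjn c hc1
    have hmax : max 0 ((max (sval T e x j - ε) 0) ^ 2
        - (j + 1) * (Real.sqrt ε * (‖T‖ + 1) ^ 2))
        ≤ ‖T (∑ i ∈ Finset.range (j + 1), c i • x i)‖ ^ 2 :=
      max_le (sq_nonneg _) hsl
    calc Real.sqrt (max 0 ((max (sval T e x j - ε) 0) ^ 2
          - (j + 1) * (Real.sqrt ε * (‖T‖ + 1) ^ 2)))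
        ≤ Real.sqrt (‖T (∑ i ∈ Finset.range (j + 1), c i • x i)‖ ^ 2) :=
          Real.sqrt_le_sqrt hmax
      _ = ‖T (∑ i ∈ Finset.range (j + 1), c i • x i)‖ :=
          Real.sqrt_sq (norm_nonneg _)
  linarith

end S9

namespace S9
variable {H : Type} [NormedAddCommGroup H] [InnerProductSpace ℂ H] [CompleteSpace H]

local notation "⟪" x ", " y "⟫" => @inner ℂ H _ x y

set_option maxHeartbeats 1000000 in
lemma stepB {p : ℝ} (hp : 0 < p) (T : H →L[ℂ] H) (e : H)
    (hinf : ¬FiniteDimensional ℂ H) (he : ‖e‖ = 1) (M : ℝ) (hM : 0 ≤ M)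
    (hw : ∀ q : H →L[ℂ] H, FiniteRank q → ‖q‖ ≤ 1 →
      (∀ w, ⟪e, q w⟫ = 0) → spNorm p (T.comp q) ≤ M)
    (n : ℕ) {ε : ℝ} (hε : 0 < ε) :
    ∑ j ∈ Finset.range n, (max (approxNum T (j + 1)
        - (ε + Real.sqrt ((n + 1) * (Real.sqrt ε * (‖T‖ + 1) ^ 2)))) 0) ^ p ≤ M ^ p := by
  obtain ⟨x, hfam⟩ := famOK_exists T e hinf he hε n
  set η := Real.sqrt ε * (‖T‖ + 1) ^ 2 with hηdef
  have hη0 : 0 ≤ η := by positivity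
  set δ := ε + Real.sqrt ((n + 1) * η) with hδdef
  have hδε : ε ≤ δ := by
    rw [hδdef]
    have : 0 ≤ Real.sqrt ((n + 1) * η) := Real.sqrt_nonneg _
    linarith
  have hδsq : (δ - ε) ^ 2 = (n + 1) * η := by
    rw [hδdef, add_sub_cancel_left, Real.sq_sqrt (by positivity)]
  set q := projOp x (Finset.range n) with hq
  have hONx : ONOn x (Finset.range n) := famOK_ONx hfam
  have hq_fr : FiniteRank q := finiteRank_projOp _ _
  have hq_norm : ‖q‖ ≤ 1 := norm_projOp_le hONx
  have hq_perp : ∀ w, ⟪e, q w⟫ = 0 := by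
    intro w
    exact inner_projOp_perp (fun i hi => famOK_e_perp hfam (Finset.mem_range.1 hi)) w
  have hWq : spNorm p (T.comp q) ≤ M := hw q hq_fr hq_norm hq_perp
  have hTq_fr : FiniteRank (T.comp q) := finiteRank_comp _ _ hq_fr
  have hsum_q : ∑ j ∈ Finset.range n, approxNum (T.comp q) j ^ p ≤ M ^ p := by
    refine le_trans (sum_le_pow_spNorm hp _ hTq_fr (Finset.range n)) ?_
    exact Real.rpow_le_rpow (spNorm_nonneg _ _) hWq hp.le
  refine le_trans (Finset.sum_le_sum (fun j hj => ?_)) hsum_q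
  rw [Finset.mem_range] at hj
  -- per-index comparison
  have hbase : max (approxNum T (j + 1) - δ) 0 ≤ approxNum (T.comp q) j := by
    have hAs : approxNum T (j + 1) ≤ sval T e x j := by
      have hrank : Module.rank ℂ
          (LinearMap.range ((T.comp (kop e x j) : H →L[ℂ] H) : H →ₗ[ℂ] H))
          ≤ ((j + 1 : ℕ) : Cardinal) := by
        refine le_trans (rank_comp_le T (kop e x j)) ?_
        refine le_trans (rank_projOp_le _ _) ?_
        rw [Finset.card_range]
      have h1 := approxNum_le T (T.comp (kop e x j)) (j + 1) hrank
      have h2 : T - T.comp (kop e x j) = T.comp (Bop e x j) := by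
        ext w
        simp [Bop, ContinuousLinearMap.comp_sub]
      rw [h2] at h1
      exact h1
    have hbern := bernstein T e hε hfam hj
    by_cases hcase : sval T e x j ≤ δ
    · refine le_trans (max_le (by linarith) le_rfl) ?_
      exact approxNum_nonneg _ _
    · push_neg at hcase
      have hmeq : max (sval T e x j - ε) 0 = sval T e x j - ε :=
        max_eq_left (by linarith)
      have hkey : (sval T e x j - δ) ^ 2
          ≤ (max (sval T e x j - ε) 0) ^ 2 - (j + 1) * η := by
        rw [hmeq]
        have hd1 : (sval T e x j - ε) ^ 2 - (sval T e x j - δ) ^ 2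
            = (δ - ε) * (2 * sval T e x j - ε - δ) := by ring
        have hd2 : (δ - ε) * (2 * sval T e x j - ε - δ) ≥ (δ - ε) * (δ - ε) := by
          refine mul_le_mul_of_nonneg_left (by linarith) (by linarith)
        have hd3 : (δ - ε) * (δ - ε) = (n + 1) * η := by
          rw [← hδsq]; ring
        have hjn1 : ((j : ℝ) + 1) * η ≤ ((n : ℝ) + 1) * η := by
          refine mul_le_mul_of_nonneg_right ?_ hη0
          have : (j : ℝ) ≤ (n : ℝ) := by exact_mod_cast hj.le
          linarith
        nlinarith
      have hsd : sval T e x j - δ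
          ≤ Real.sqrt (max 0 ((max (sval T e x j - ε) 0) ^ 2 - (j + 1) * η)) := by
        have hrs : sval T e x j - δ = Real.sqrt ((sval T e x j - δ) ^ 2) :=
          (Real.sqrt_sq (by linarith)).symm
        rw [hrs]
        exact Real.sqrt_le_sqrt (le_max_of_le_right hkey)
      refine max_le ?_ (approxNum_nonneg _ _)
      calc approxNum T (j + 1) - δ ≤ sval T e x j - δ := by linarith
        _ ≤ Real.sqrt (max 0 ((max (sval T e x j - ε) 0) ^ 2 - (j + 1) * η)) := hsd
        _ ≤ approxNum (T.comp q) j := hbern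
  exact Real.rpow_le_rpow (le_max_right _ _) hbase hp.le

end S9

namespace S9
variable {H : Type} [NormedAddCommGroup H] [InnerProductSpace ℂ H] [CompleteSpace H]

local notation "⟪" x ", " y "⟫" => @inner ℂ H _ x y

lemma summable_of_perp_windows {p : ℝ} (hp : 0 < p) (T : H →L[ℂ] H) (e : H)
    (he : ‖e‖ = 1) (M : ℝ) (hM : 0 ≤ M)
    (hw : ∀ q : H →L[ℂ] H, FiniteRank q → ‖q‖ ≤ 1 →
      (∀ w, ⟪e, q w⟫ = 0) → spNorm p (T.comp q) ≤ M) :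
    Summable (fun n => approxNum T n ^ p) := by
  by_cases hfin : FiniteDimensional ℂ H
  · refine summable_fr hp T ?_
    unfold FiniteRank
    infer_instance
  have hA : ∀ n, ∑ j ∈ Finset.range n, approxNum T (j + 1) ^ p ≤ M ^ p := by
    intro n
    set g : ℝ → ℝ :=
      fun d => ∑ j ∈ Finset.range n, (max (approxNum T (j + 1) - d) 0) ^ p with hgdef
    have hgc : Continuous g := by
      refine continuous_finset_sum _ (fun j _ => ?_)
      have h1 : Continuous fun d : ℝ => max (approxNum T (j + 1) - d) 0 :=
        Continuous.max (continuous_const.sub continuous_id) continuous_const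
      have h2 : Continuous fun y : ℝ => y ^ p := by
        rw [continuous_iff_continuousAt]
        intro y
        exact Real.continuousAt_rpow_const y p (Or.inr hp.le)
      exact h2.comp h1
    set D : ℝ → ℝ :=
      fun ε => ε + Real.sqrt (((n : ℝ) + 1) * (Real.sqrt ε * (‖T‖ + 1) ^ 2)) with hDdef
    have hDc : Continuous D := by
      refine Continuous.add continuous_id ?_
      exact Real.continuous_sqrt.comp
        (continuous_const.mul (Real.continuous_sqrt.mul continuous_const))
    have hD0 : D 0 = 0 := by
      simp [hDdef]
    have hεseq : Filter.Tendsto (fun m : ℕ => 1 / ((m : ℝ) + 1)) Filter.atTop (nhds 0) :=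
      tendsto_one_div_add_atTop_nhds_zero_nat
    have hDseq : Filter.Tendsto (fun m : ℕ => D (1 / ((m : ℝ) + 1)))
        Filter.atTop (nhds 0) := by
      have := (hDc.tendsto 0).comp hεseq
      rwa [hD0] at this
    have hgseq : Filter.Tendsto (fun m : ℕ => g (D (1 / ((m : ℝ) + 1))))
        Filter.atTop (nhds (g 0)) := (hgc.tendsto 0).comp hDseq
    have hbound : ∀ m : ℕ, g (D (1 / ((m : ℝ) + 1))) ≤ M ^ p := by
      intro m
      have hεpos : (0 : ℝ) < 1 / ((m : ℝ) + 1) := by positivity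
      simpa [hgdef, hDdef] using stepB hp T e hfin he M hM hw n hεpos
    have hg0 : g 0 = ∑ j ∈ Finset.range n, approxNum T (j + 1) ^ p := by
      rw [hgdef]
      refine Finset.sum_congr rfl (fun j _ => ?_)
      rw [sub_zero, max_eq_left (approxNum_nonneg _ _)]
    rw [← hg0]
    exact le_of_tendsto hgseq (Filter.Eventually.of_forall hbound)
  have hs : Summable (fun j => approxNum T (j + 1) ^ p) :=
    summable_of_sum_range_le (fun j => Real.rpow_nonneg (approxNum_nonneg _ _) p) hA
  exact (summable_nat_add_iff 1).1 hs

end S9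

namespace S9
variable {H : Type} [NormedAddCommGroup H] [InnerProductSpace ℂ H] [CompleteSpace H]

local notation "⟪" x ", " y "⟫" => @inner ℂ H _ x y

lemma norm_le_spNorm_of_summable {p : ℝ} (hp : 0 < p) (f : H →L[ℂ] H)
    (hs : Summable (fun n => approxNum f n ^ p)) : ‖f‖ ≤ spNorm p f := by
  have h1 : ‖f‖ ^ p ≤ ∑' n, approxNum f n ^ p := by
    rw [← approxNum_zero_eq f]
    exact Summable.le_tsum hs 0 (fun j _ => Real.rpow_nonneg (approxNum_nonneg f j) p)
  calc ‖f‖ = (‖f‖ ^ p) ^ (1 / p) := by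
        rw [← Real.rpow_mul (norm_nonneg f), mul_one_div_cancel hp.ne', Real.rpow_one]
    _ ≤ (∑' n, approxNum f n ^ p) ^ (1 / p) :=
        Real.rpow_le_rpow (Real.rpow_nonneg (norm_nonneg f) p) h1 (by positivity)
    _ = spNorm p f := rfl

lemma rank_neg (G : H →L[ℂ] H) :
    LinearMap.rank ((-G : H →L[ℂ] H) : H →ₗ[ℂ] H) = LinearMap.rank (G : H →ₗ[ℂ] H) := by
  unfold LinearMap.rank
  rw [ContinuousLinearMap.coe_neg, LinearMap.range_neg]

lemma approxNum_sub_le_of_rank (T G : H →L[ℂ] H) (n k : ℕ)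
    (hG : LinearMap.rank (G : H →ₗ[ℂ] H) ≤ k) :
    approxNum (T - G) (n + k) ≤ approxNum T n := by
  have h := approxNum_add_le_of_rank T (-G) n k (by rw [rank_neg]; exact hG)
  rwa [← sub_eq_add_neg] at h

lemma summable_sub_rank_one {p : ℝ} (hp : 0 < p) (T G : H →L[ℂ] H)
    (hT : Summable (fun n => approxNum T n ^ p))
    (hG : LinearMap.rank (G : H →ₗ[ℂ] H) ≤ 1) :
    Summable (fun n => approxNum (T - G) n ^ p) := by
  have hshift : Summable (fun n => approxNum (T - G) (n + 1) ^ p) := by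
    refine Summable.of_nonneg_of_le
      (fun n => Real.rpow_nonneg (approxNum_nonneg _ _) p) (fun n => ?_) hT
    exact Real.rpow_le_rpow (approxNum_nonneg _ _)
      (approxNum_sub_le_of_rank T G n 1 hG) hp.le
  exact (summable_nat_add_iff 1).1 hshift

lemma rank_comp_rankOne_le (g : H →L[ℂ] H) (y x : H) :
    LinearMap.rank ((g.comp (rankOne y x) : H →L[ℂ] H) : H →ₗ[ℂ] H) ≤ 1 :=
  le_trans (rank_comp_le g (rankOne y x)) (rank_rankOne_le y x)

end S9


section main
open S9

local notation "⟪" x ", " y "⟫" => @inner ℂ _ _ x y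

/-- let `φ : H → H` be quasilinear and `Φ` a homogeneous map on
finite-rank operators with (a) `‖Φ(y ⊗ x) − y ⊗ φ x‖_p ≤ C ‖y‖ ‖x‖` and
(b) `‖Φ(f a) − (Φ f) a‖_p ≤ C ‖f‖_p ‖a‖`.  Then for every finite-rank `f` and
every `x`, `‖(Φ f) x − φ (f x)‖ ≤ 2 C ‖f‖_p ‖x‖`; in particular the
corresponding supremum over the unit ball is at most `2 C ‖f‖_p`. -/
theorem statement9 {H : Type} [NormedAddCommGroup H] [InnerProductSpace ℂ H]
    [CompleteSpace H] [TopologicalSpace.SeparableSpace H]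
    (p C Q : ℝ) (hp : 0 < p) (hC : 0 ≤ C)
    (φ : H → H)
    (hφ_hom : ∀ (c : ℂ) (x : H), φ (c • x) = c • φ x)
    (hφ_quasi : ∀ x y : H, ‖φ (x + y) - φ x - φ y‖ ≤ Q * (‖x‖ + ‖y‖))
    (Φ : (H →L[ℂ] H) → (H →L[ℂ] H))
    (hΦ_hom : ∀ (c : ℂ) (f : H →L[ℂ] H), FiniteRank f → Φ (c • f) = c • Φ f)
    (ha : ∀ x y : H, spNorm p (Φ (rankOne y x) - rankOne y (φ x)) ≤ C * ‖y‖ * ‖x‖)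
    (hb : ∀ (f a : H →L[ℂ] H), FiniteRank f →
      spNorm p (Φ (f.comp a) - (Φ f).comp a) ≤ C * spNorm p f * ‖a‖) :
    ∀ (f : H →L[ℂ] H), FiniteRank f →
      (∀ x : H, ‖(Φ f) x - φ (f x)‖ ≤ 2 * C * spNorm p f * ‖x‖) ∧
      ∀ x : H, ‖x‖ ≤ 1 → ‖(Φ f) x - φ (f x)‖ ≤ 2 * C * spNorm p f := by
  intro f hf
  have hsp0 : 0 ≤ spNorm p f := spNorm_nonneg p f
  have key : ∀ x : H, ‖(Φ f) x - φ (f x)‖ ≤ 2 * C * spNorm p f * ‖x‖ := by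
    intro x
    by_cases hx0 : x = 0
    · have hφ0 : φ (0 : H) = 0 := by
        have h := hφ_hom 0 0
        simpa using h
      rw [hx0]
      simp [hφ0]
    · have hxn : ‖x‖ ≠ 0 := norm_ne_zero_iff.2 hx0
      have hxpos : 0 < ‖x‖ := norm_pos_iff.2 hx0
      set e : H := ((‖x‖⁻¹ : ℝ) : ℂ) • x with hedef
      have he : ‖e‖ = 1 := by
        rw [hedef, norm_smul, Complex.norm_real, Real.norm_eq_abs,
          abs_of_pos (by positivity), inv_mul_cancel₀ hxn]
      have hee : ⟪e, e⟫ = 1 := by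
        rw [inner_self_eq_norm_sq_to_K, he]
        norm_num
      have hΦ0 : Φ 0 = 0 := by
        have h := hΦ_hom 0 0 finiteRank_zero
        simpa using h
      have hfa : f.comp (rankOne e x) = rankOne e (f x) := comp_rankOne f e x
      have hM : 0 ≤ C * spNorm p (rankOne e (f x)) :=
        mul_nonneg hC (spNorm_nonneg _ _)
      -- windows for T := Φ (rankOne e (f x))
      have hw : ∀ q : H →L[ℂ] H, FiniteRank q → ‖q‖ ≤ 1 →
          (∀ w, ⟪e, q w⟫ = 0) →
          spNorm p ((Φ (rankOne e (f x))).comp q) ≤ C * spNorm p (rankOne e (f x)) := by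
        intro q hqfr hqn hqperp
        have hRq : (rankOne e (f x)).comp q = 0 := by
          ext w
          simp [rankOne_apply, hqperp w]
        have hb1 := hb (rankOne e (f x)) q (finiteRank_rankOne e (f x))
        rw [hRq, hΦ0, zero_sub, spNorm_neg] at hb1
        calc spNorm p ((Φ (rankOne e (f x))).comp q)
            ≤ C * spNorm p (rankOne e (f x)) * ‖q‖ := hb1
          _ ≤ C * spNorm p (rankOne e (f x)) * 1 :=
              mul_le_mul_of_nonneg_left hqn hM
          _ = C * spNorm p (rankOne e (f x)) := mul_one _
      have hsummT : Summable (fun n => approxNum (Φ (rankOne e (f x))) n ^ p) :=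
        summable_of_perp_windows hp _ e he _ hM hw
      -- the two finite-rank-perturbed operators
      have hXsum : Summable (fun n =>
          approxNum (Φ (rankOne e (f x)) - rankOne e (φ (f x))) n ^ p) :=
        summable_sub_rank_one hp _ _ hsummT (rank_rankOne_le _ _)
      have hOsum : Summable (fun n =>
          approxNum (Φ (rankOne e (f x)) - (Φ f).comp (rankOne e x)) n ^ p) :=
        summable_sub_rank_one hp _ _ hsummT (rank_comp_rankOne_le _ _ _)
      have hXval : spNorm p (Φ (rankOne e (f x)) - rankOne e (φ (f x))) ≤ C * ‖f x‖ := by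
        have h := ha (f x) e
        rw [he] at h
        simpa using h
      have hOval : spNorm p (Φ (rankOne e (f x)) - (Φ f).comp (rankOne e x))
          ≤ C * spNorm p f * ‖x‖ := by
        have hb2 := hb f (rankOne e x) hf
        rw [hfa] at hb2
        refine le_trans hb2 ?_
        have h1 : ‖rankOne e x‖ ≤ ‖x‖ := by
          have := norm_rankOne_le e x
          rwa [he, one_mul] at this
        exact mul_le_mul_of_nonneg_left h1 (mul_nonneg hC hsp0)
      have hXnorm : ‖Φ (rankOne e (f x)) - rankOne e (φ (f x))‖
          ≤ spNorm p (Φ (rankOne e (f x)) - rankOne e (φ (f x))) :=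
        norm_le_spNorm_of_summable hp _ hXsum
      have hOnorm : ‖Φ (rankOne e (f x)) - (Φ f).comp (rankOne e x)‖
          ≤ spNorm p (Φ (rankOne e (f x)) - (Φ f).comp (rankOne e x)) :=
        norm_le_spNorm_of_summable hp _ hOsum
      have haopx : (rankOne e x) e = x := by
        rw [rankOne_apply, hee, one_smul]
      have hXe : (Φ (rankOne e (f x)) - rankOne e (φ (f x))) e
          = Φ (rankOne e (f x)) e - φ (f x) := by
        rw [ContinuousLinearMap.sub_apply, rankOne_apply, hee, one_smul]
      have hOe : (Φ (rankOne e (f x)) - (Φ f).comp (rankOne e x)) e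
          = Φ (rankOne e (f x)) e - (Φ f) x := by
        rw [ContinuousLinearMap.sub_apply, ContinuousLinearMap.comp_apply, haopx]
      have hfxb : ‖f x‖ ≤ spNorm p f * ‖x‖ :=
        le_trans (f.le_opNorm x)
          (mul_le_mul_of_nonneg_right (norm_le_spNorm hp f hf) (norm_nonneg x))
      calc ‖(Φ f) x - φ (f x)‖
          = ‖(Φ (rankOne e (f x)) - rankOne e (φ (f x))) e
              - (Φ (rankOne e (f x)) - (Φ f).comp (rankOne e x)) e‖ := by
            rw [hXe, hOe]
            congr 1
            abel
        _ ≤ ‖(Φ (rankOne e (f x)) - rankOne e (φ (f x))) e‖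
              + ‖(Φ (rankOne e (f x)) - (Φ f).comp (rankOne e x)) e‖ := norm_sub_le _ _
        _ ≤ ‖Φ (rankOne e (f x)) - rankOne e (φ (f x))‖ * ‖e‖
              + ‖Φ (rankOne e (f x)) - (Φ f).comp (rankOne e x)‖ * ‖e‖ :=
            add_le_add (ContinuousLinearMap.le_opNorm _ _)
              (ContinuousLinearMap.le_opNorm _ _)
        _ = ‖Φ (rankOne e (f x)) - rankOne e (φ (f x))‖
              + ‖Φ (rankOne e (f x)) - (Φ f).comp (rankOne e x)‖ := by
            rw [he, mul_one, mul_one]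
        _ ≤ spNorm p (Φ (rankOne e (f x)) - rankOne e (φ (f x)))
              + spNorm p (Φ (rankOne e (f x)) - (Φ f).comp (rankOne e x)) :=
            add_le_add hXnorm hOnorm
        _ ≤ C * ‖f x‖ + C * spNorm p f * ‖x‖ := add_le_add hXval hOval
        _ ≤ C * (spNorm p f * ‖x‖) + C * spNorm p f * ‖x‖ :=
            add_le_add (mul_le_mul_of_nonneg_left hfxb hC) le_rfl
        _ = 2 * C * spNorm p f * ‖x‖ := by ring
  refine ⟨key, fun x hx => ?_⟩
  calc ‖(Φ f) x - φ (f x)‖ ≤ 2 * C * spNorm p f * ‖x‖ := key x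
    _ ≤ 2 * C * spNorm p f * 1 :=
        mul_le_mul_of_nonneg_left hx (by positivity)
    _ = 2 * C * spNorm p f := mul_one _

end main
end

section
/- For a sequence x ∈ c₀, the rank sequence r_x(n) = #{k : |x(k)| > |x(n)|, or |x(k)| = |x(n)| and k ≤ n} is well-defined (finite for each n) and injective as a map ℕ → ℕ; moreover n ↦ |x|∘r_x^{-1} enumerates the decreasing rearrangement of |x|, i.e., r_x(n) is the position of |x(n)| in the decreasing rearrangement of |x|. -/
/-!
`rankSet x n` is the initial segment `{k | key k ≤ key n}` for the injective key
`k ↦ toLex (-‖x k‖, k)` into a linear order, and these segments are finite because `x → 0`.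
For any injective key with finite initial segments, the rank `a ↦ #{b | key b ≤ key a}` is
strictly monotone in the key, and it maps the initial segment of `a` injectively into
`[1, rank a]`, hence onto it by counting; since the ranks are unbounded, every `m ≥ 1` is a rank.
-/

open Filter

/-- The set whose cardinality is the rank `r_x(n)`: the indices `k` with
`|x k| > |x n|`, or `|x k| = |x n|` and `k ≤ n`. -/
def rankSet (x : ℕ → ℂ) (n : ℕ) : Set ℕ :=
  {k | ‖x k‖ > ‖x n‖ ∨ (‖x k‖ = ‖x n‖ ∧ k ≤ n)}

/-- The rank sequence `r_x(n)`: the position of `|x n|` in the decreasing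
rearrangement of `|x|`. -/
noncomputable def rankSeq (x : ℕ → ℂ) (n : ℕ) : ℕ := (rankSet x n).ncard

noncomputable def rankBy {α β : Type*} [LinearOrder β] (f : α → β) (a : α) : ℕ :=
  {b | f b ≤ f a}.ncard

section

variable {α β : Type*} [LinearOrder β] {f : α → β}

theorem rankBy_le_rankBy (hfin : ∀ a, {b | f b ≤ f a}.Finite) {a a' : α} (h : f a ≤ f a') :
    rankBy f a ≤ rankBy f a' :=
  Set.ncard_le_ncard (fun _ hb => le_trans hb h) (hfin a')

theorem rankBy_lt_rankBy (hfin : ∀ a, {b | f b ≤ f a}.Finite) {a a' : α} (h : f a < f a') :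
    rankBy f a < rankBy f a' := by
  refine Set.ncard_lt_ncard ?_ (hfin a')
  exact (Set.ssubset_iff_of_subset fun _ hb => le_trans hb h.le).mpr
    ⟨a', le_rfl, not_le.mpr h⟩

theorem rankBy_le_rankBy_iff (hfin : ∀ a, {b | f b ≤ f a}.Finite) {a a' : α} :
    rankBy f a ≤ rankBy f a' ↔ f a ≤ f a' :=
  ⟨fun h => not_lt.mp fun h' => (rankBy_lt_rankBy hfin h').not_ge h, rankBy_le_rankBy hfin⟩

theorem rankBy_injective (hf : Function.Injective f) (hfin : ∀ a, {b | f b ≤ f a}.Finite) :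
    Function.Injective (rankBy f) :=
  fun _ _ h => hf <|
    le_antisymm ((rankBy_le_rankBy_iff hfin).mp h.le) ((rankBy_le_rankBy_iff hfin).mp h.ge)

theorem one_le_rankBy (hfin : ∀ a, {b | f b ≤ f a}.Finite) (a : α) : 1 ≤ rankBy f a :=
  (Set.ncard_pos (hfin a)).mpr ⟨a, le_rfl⟩

theorem image_rankBy_setOf_le (hf : Function.Injective f) (hfin : ∀ a, {b | f b ≤ f a}.Finite)
    (a : α) : rankBy f '' {b | f b ≤ f a} = Finset.Icc 1 (rankBy f a) := by
  refine Set.eq_of_subset_of_ncard_le ?_ ?_ (Finset.finite_toSet _)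
  · rintro _ ⟨b, hb, rfl⟩
    exact Finset.mem_Icc.mpr ⟨one_le_rankBy hfin b, rankBy_le_rankBy hfin hb⟩
  · rw [Set.ncard_coe_finset, Nat.card_Icc,
      Set.ncard_image_of_injective _ (rankBy_injective hf hfin)]
    exact (Nat.add_sub_cancel _ _).le

theorem exists_rankBy_eq [Infinite α] (hf : Function.Injective f)
    (hfin : ∀ a, {b | f b ≤ f a}.Finite) {m : ℕ} (hm : 1 ≤ m) : ∃ a, rankBy f a = m := by
  obtain ⟨_, ⟨a, rfl⟩, hma⟩ :=
    (Set.infinite_range_of_injective (rankBy_injective hf hfin)).exists_gt m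
  have hm_mem : m ∈ rankBy f '' {b | f b ≤ f a} := by
    rw [image_rankBy_setOf_le hf hfin]
    exact Finset.mem_Icc.mpr ⟨hm, hma.le⟩
  obtain ⟨b, -, hb⟩ := hm_mem
  exact ⟨b, hb⟩

end

theorem Filter.Tendsto.finite_setOf_le_norm {ι E : Type*} [SeminormedAddGroup E] {x : ι → E}
    (hx : Tendsto x cofinite (nhds 0)) {ε : ℝ} (hε : 0 < ε) : {k | ε ≤ ‖x k‖}.Finite := by
  simpa only [not_lt] using
    eventually_cofinite.mp ((tendsto_zero_iff_norm_tendsto_zero.mp hx).eventually (gt_mem_nhds hε))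

/-- Larger modulus first, ties broken by the index. -/
noncomputable def rankKey (x : ℕ → ℂ) (k : ℕ) : Lex (ℝ × ℕ) := toLex (-‖x k‖, k)

theorem rankKey_injective (x : ℕ → ℂ) : Function.Injective (rankKey x) :=
  fun _ _ h => congrArg Prod.snd (toLex.injective h)

theorem rankSet_eq_setOf_rankKey_le (x : ℕ → ℂ) (n : ℕ) :
    rankSet x n = {k | rankKey x k ≤ rankKey x n} := by
  ext k
  simp only [rankSet, rankKey, Set.mem_ofPred_eq, Prod.Lex.toLex_le_toLex, neg_lt_neg_iff,
    neg_inj, gt_iff_lt]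

theorem rankSeq_eq_rankBy (x : ℕ → ℂ) : rankSeq x = rankBy (rankKey x) :=
  funext fun n => congrArg Set.ncard (rankSet_eq_setOf_rankKey_le x n)

theorem rankSet_finite {x : ℕ → ℂ} (hx0 : Tendsto x atTop (nhds 0)) {n : ℕ} (hxn : x n ≠ 0) :
    (rankSet x n).Finite := by
  refine ((Nat.cofinite_eq_atTop ▸ hx0).finite_setOf_le_norm (norm_pos_iff.mpr hxn)).subset ?_
  rintro k (hk | ⟨hk, -⟩)
  exacts [hk.le, hk.ge]

/-- for a (nowhere vanishing) null sequence `x ∈ c₀`, the rank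
sequence `r_x` is well defined (each `rankSet` is finite) and injective;
moreover `|x| ∘ r_x⁻¹` enumerates the decreasing rearrangement of `|x|`:
`r_x` is monotone against `|x|` (`r_x m ≤ r_x n → |x n| ≤ |x m|`) and takes
every value `m ≥ 1`, so `r_x(n)` is exactly the position of `|x n|` in the
decreasing rearrangement of `|x|`. -/
theorem statement10 (x : ℕ → ℂ)
    (hx0 : Tendsto x atTop (nhds 0)) (hxne : ∀ n, x n ≠ 0) :
    (∀ n, (rankSet x n).Finite) ∧
    Function.Injective (rankSeq x) ∧
    (∀ m n, rankSeq x m ≤ rankSeq x n → ‖x n‖ ≤ ‖x m‖) ∧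
    (∀ m : ℕ, 1 ≤ m → ∃ n, rankSeq x n = m) := by
  have hfin : ∀ n, (rankSet x n).Finite := fun n => rankSet_finite hx0 (hxne n)
  have hfin_key : ∀ n, {k | rankKey x k ≤ rankKey x n}.Finite := by
    simpa only [rankSet_eq_setOf_rankKey_le] using hfin
  rw [rankSeq_eq_rankBy]
  refine ⟨hfin, rankBy_injective (rankKey_injective x) hfin_key, fun m n h => ?_,
    fun m hm => exists_rankBy_eq (rankKey_injective x) hfin_key hm⟩
  simpa [rankKey] using Prod.Lex.monotone_fst _ _ ((rankBy_le_rankBy_iff hfin_key).mp h)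
end

section
/- Every centralizer Φ on ℓ^p is quasilinear with Q(Φ) ≤ M·C(Φ), where M depends only on p (the modulus of concavity of ℓ^p): that is, ‖Φ(x+y) − Φ(x) − Φ(y)‖_p ≤ M·C(Φ)(‖x‖_p + ‖y‖_p) for all finitely supported x, y. -/
/-- Finitely supported sequences (the subspace `ℓ^p⁰ ⊆ ℓ^p`). -/
def FinSupp (x : ℕ → ℂ) : Prop := (Function.support x).Finite

/-- The `ℓ^p` quasinorm `(Σ |x n|^p)^(1/p)`. -/
noncomputable def pnorm (p : ℝ) (x : ℕ → ℂ) : ℝ := (∑' n, ‖x n‖ ^ p) ^ (1 / p)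

/-! Write `w = |x| + |y|`, so that `x = a w`, `y = b w` and `x + y = (a + b) w` with
`‖a‖_∞, ‖b‖_∞ ≤ 1`. The centralizer inequality for the multipliers `a`, `b`, `a + b`, applied to
the single vector `w`, bounds `Φ(x) - aΦ(w)`, `Φ(y) - bΦ(w)` and `Φ(x + y) - (a + b)Φ(w)` by
multiples of `C ‖w‖_p`, and `Φ(x + y) - Φ(x) - Φ(y)` is their alternating sum. The quasi-triangle
inequality of `ℓ^p` then gives the bound, since `‖w‖_p ≤ 2^(1+1/p) (‖x‖_p + ‖y‖_p)`. -/

lemma Real.add_rpow_le_two_rpow_mul_rpow_add_rpow {p a b : ℝ} (ha : 0 ≤ a) (hb : 0 ≤ b)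
    (hp : 0 ≤ p) : (a + b) ^ p ≤ 2 ^ p * (a ^ p + b ^ p) := calc
  (a + b) ^ p ≤ (2 * max a b) ^ p := by
    rw [two_mul]; gcongr <;> [exact le_max_left a b; exact le_max_right a b]
  _ = 2 ^ p * (max a b) ^ p := Real.mul_rpow zero_le_two (ha.trans (le_max_left a b))
  _ = 2 ^ p * max (a ^ p) (b ^ p) := by rw [Real.rpow_max ha hb hp]
  _ ≤ 2 ^ p * (a ^ p + b ^ p) := by
    gcongr; exact max_le_add_of_nonneg (by positivity) (by positivity)

section Pi

variable {ι 𝕜 : Type*} [NormedDivisionRing 𝕜] {x w : ι → 𝕜}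

lemma div_mul_cancel_of_norm_le (h : ∀ n, ‖x n‖ ≤ ‖w n‖) : x / w * w = x := by
  funext n
  by_cases hw : w n = 0
  · have hx : x n = 0 := norm_le_zero_iff.1 (by simpa [hw] using h n)
    simp [hw, hx]
  · exact div_mul_cancel₀ (x n) hw

lemma norm_div_apply_le_one_of_norm_le (h : ∀ n, ‖x n‖ ≤ ‖w n‖) (n : ι) :
    ‖(x / w) n‖ ≤ 1 := by
  rw [Pi.div_apply, norm_div]
  exact div_le_one_of_le₀ (h n) (norm_nonneg _)

end Pi

lemma FinSupp.of_norm_le_add {x y w : ℕ → ℂ} (hx : FinSupp x) (hy : FinSupp y)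
    (h : ∀ n, ‖w n‖ ≤ ‖x n‖ + ‖y n‖) : FinSupp w := by
  refine (hx.union hy).subset fun n hn => ?_
  by_contra hxy
  simp only [Set.mem_union, Function.mem_support, not_or, not_not] at hxy
  exact hn (norm_le_zero_iff.1 (by simpa [hxy.1, hxy.2] using h n))

lemma FinSupp.mul_left (a : ℕ → ℂ) {w : ℕ → ℂ} (hw : FinSupp w) : FinSupp (a * w) :=
  hw.subset (Function.support_mul_subset_right a w)

section Quasinorm

variable {p : ℝ}

lemma pnorm_nonneg (x : ℕ → ℂ) : 0 ≤ pnorm p x :=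
  Real.rpow_nonneg (tsum_nonneg fun _ => Real.rpow_nonneg (norm_nonneg _) p) _

lemma FinSupp.summable_norm_rpow (hp : 0 < p) {x : ℕ → ℂ} (hx : FinSupp x) :
    Summable fun n => ‖x n‖ ^ p := by
  refine summable_of_ne_finset_zero (s := hx.toFinset) fun n hn => ?_
  simp [Function.notMem_support.1 fun h => hn (hx.mem_toFinset.2 h), Real.zero_rpow hp.ne']

variable {u v w : ℕ → ℂ}

lemma norm_rpow_le_of_norm_le_add (hp : 0 ≤ p) (h : ∀ n, ‖w n‖ ≤ ‖u n‖ + ‖v n‖) (n : ℕ) :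
    ‖w n‖ ^ p ≤ 2 ^ p * (‖u n‖ ^ p + ‖v n‖ ^ p) :=
  (Real.rpow_le_rpow (norm_nonneg _) (h n) hp).trans <|
    Real.add_rpow_le_two_rpow_mul_rpow_add_rpow (norm_nonneg _) (norm_nonneg _) hp

lemma summable_norm_rpow_of_norm_le_add (hp : 0 ≤ p) (hu : Summable fun n => ‖u n‖ ^ p)
    (hv : Summable fun n => ‖v n‖ ^ p) (h : ∀ n, ‖w n‖ ≤ ‖u n‖ + ‖v n‖) :
    Summable fun n => ‖w n‖ ^ p :=
  .of_nonneg_of_le (fun _ => Real.rpow_nonneg (norm_nonneg _) _)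
    (norm_rpow_le_of_norm_le_add hp h) ((hu.add hv).mul_left _)

lemma summable_norm_rpow_sub (hp : 0 ≤ p) (hu : Summable fun n => ‖u n‖ ^ p)
    (hv : Summable fun n => ‖v n‖ ^ p) : Summable fun n => ‖(u - v) n‖ ^ p :=
  summable_norm_rpow_of_norm_le_add hp hu hv fun n => norm_sub_le (u n) (v n)

lemma summable_norm_rpow_mul_of_norm_le (hp : 0 ≤ p) {a : ℕ → ℂ} {A : ℝ} (ha : ∀ n, ‖a n‖ ≤ A)
    (hu : Summable fun n => ‖u n‖ ^ p) : Summable fun n => ‖(a * u) n‖ ^ p := by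
  refine .of_nonneg_of_le (fun _ => Real.rpow_nonneg (norm_nonneg _) _) (fun n => ?_)
    (hu.mul_left (A ^ p))
  rw [Pi.mul_apply, norm_mul, Real.mul_rpow (norm_nonneg _) (norm_nonneg _)]
  gcongr
  exact ha n

lemma pnorm_le_of_norm_le_add (hp : 0 < p) (hu : Summable fun n => ‖u n‖ ^ p)
    (hv : Summable fun n => ‖v n‖ ^ p) (h : ∀ n, ‖w n‖ ≤ ‖u n‖ + ‖v n‖) :
    pnorm p w ≤ 2 ^ (1 + 1 / p) * (pnorm p u + pnorm p v) := by
  set U := ∑' n, ‖u n‖ ^ p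
  set V := ∑' n, ‖v n‖ ^ p
  have hU : 0 ≤ U := tsum_nonneg fun _ => Real.rpow_nonneg (norm_nonneg _) p
  have hV : 0 ≤ V := tsum_nonneg fun _ => Real.rpow_nonneg (norm_nonneg _) p
  have hsum : ∑' n, ‖w n‖ ^ p ≤ 2 ^ p * (U + V) := by
    rw [← hu.tsum_add hv, ← tsum_mul_left]
    exact (summable_norm_rpow_of_norm_le_add hp.le hu hv h).tsum_le_tsum
      (norm_rpow_le_of_norm_le_add hp.le h) ((hu.add hv).mul_left _)
  calc pnorm p w ≤ (2 ^ p * (U + V)) ^ (1 / p) := by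
        unfold pnorm; gcongr
    _ = 2 * (U + V) ^ (1 / p) := by
        rw [Real.mul_rpow (by positivity) (by positivity), ← Real.rpow_mul zero_le_two,
          mul_one_div_cancel hp.ne', Real.rpow_one]
    _ ≤ 2 * (2 ^ (1 / p) * (U ^ (1 / p) + V ^ (1 / p))) := by
        gcongr; exact Real.add_rpow_le_two_rpow_mul_rpow_add_rpow hU hV (by positivity)
    _ = 2 ^ (1 + 1 / p) * (pnorm p u + pnorm p v) := by
        rw [Real.rpow_add zero_lt_two, Real.rpow_one, pnorm, pnorm, mul_assoc]

lemma pnorm_sub_sub_le (hp : 0 < p) {t : ℕ → ℂ} (hu : Summable fun n => ‖u n‖ ^ p)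
    (hv : Summable fun n => ‖v n‖ ^ p) (ht : Summable fun n => ‖t n‖ ^ p) :
    pnorm p (u - v - t) ≤
      2 ^ (1 + 1 / p) * (pnorm p u + 2 ^ (1 + 1 / p) * (pnorm p v + pnorm p t)) := by
  have hvt : pnorm p (v + t) ≤ 2 ^ (1 + 1 / p) * (pnorm p v + pnorm p t) :=
    pnorm_le_of_norm_le_add hp hv ht fun n => norm_add_le (v n) (t n)
  calc pnorm p (u - v - t) ≤ 2 ^ (1 + 1 / p) * (pnorm p u + pnorm p (v + t)) := by
        refine pnorm_le_of_norm_le_add hp hu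
          (summable_norm_rpow_of_norm_le_add hp.le hv ht fun n => norm_add_le (v n) (t n))
          fun n => ?_
        rw [sub_sub]; exact norm_sub_le (u n) ((v + t) n)
    _ ≤ _ := by gcongr

end Quasinorm

section Centralizer

variable {p C : ℝ} {Φ : (ℕ → ℂ) → (ℕ → ℂ)}

lemma pnorm_centralizer_le {A : ℝ} (hC : 0 ≤ C)
    (hcen : ∀ (a x : ℕ → ℂ), FinSupp x → (∃ A : ℝ, ∀ n, ‖a n‖ ≤ A) →
      pnorm p (Φ (a * x) - a * Φ x) ≤ C * (⨆ n, ‖a n‖) * pnorm p x)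
    {a w : ℕ → ℂ} (hw : FinSupp w) (ha : ∀ n, ‖a n‖ ≤ A) :
    pnorm p (Φ (a * w) - a * Φ w) ≤ C * A * pnorm p w :=
  (hcen a w hw ⟨A, ha⟩).trans <| by
    gcongr
    · exact pnorm_nonneg w
    · exact ciSup_le ha

lemma pnorm_centralizer_add_sub_sub_le (hp : 0 < p) (hC : 0 ≤ C)
    (hsum : ∀ x : ℕ → ℂ, FinSupp x → Summable fun n => ‖Φ x n‖ ^ p)
    (hcen : ∀ (a x : ℕ → ℂ), FinSupp x → (∃ A : ℝ, ∀ n, ‖a n‖ ≤ A) →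
      pnorm p (Φ (a * x) - a * Φ x) ≤ C * (⨆ n, ‖a n‖) * pnorm p x)
    {a b w : ℕ → ℂ} (hw : FinSupp w) (ha : ∀ n, ‖a n‖ ≤ 1) (hb : ∀ n, ‖b n‖ ≤ 1) :
    pnorm p (Φ ((a + b) * w) - Φ (a * w) - Φ (b * w)) ≤
      2 * 2 ^ (1 + 1 / p) * (1 + 2 ^ (1 + 1 / p)) * C * pnorm p w := by
  have hab : ∀ n, ‖(a + b) n‖ ≤ 2 := fun n =>
    (norm_add_le _ _).trans (by linarith [ha n, hb n])
  have hΦw := hsum w hw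
  have hsplit : Φ ((a + b) * w) - Φ (a * w) - Φ (b * w) = (Φ ((a + b) * w) - (a + b) * Φ w)
      - (Φ (a * w) - a * Φ w) - (Φ (b * w) - b * Φ w) := by ring
  have hU := pnorm_centralizer_le hC hcen hw hab
  have hV := pnorm_centralizer_le hC hcen hw ha
  have hW := pnorm_centralizer_le hC hcen hw hb
  calc pnorm p (Φ ((a + b) * w) - Φ (a * w) - Φ (b * w))
      ≤ 2 ^ (1 + 1 / p) * (C * 2 * pnorm p w
          + 2 ^ (1 + 1 / p) * (C * 1 * pnorm p w + C * 1 * pnorm p w)) := by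
        rw [hsplit]
        refine (pnorm_sub_sub_le hp ?_ ?_ ?_).trans (by gcongr)
        · exact summable_norm_rpow_sub hp.le (hsum _ (hw.mul_left _))
            (summable_norm_rpow_mul_of_norm_le hp.le hab hΦw)
        · exact summable_norm_rpow_sub hp.le (hsum _ (hw.mul_left _))
            (summable_norm_rpow_mul_of_norm_le hp.le ha hΦw)
        · exact summable_norm_rpow_sub hp.le (hsum _ (hw.mul_left _))
            (summable_norm_rpow_mul_of_norm_le hp.le hb hΦw)
    _ = 2 * 2 ^ (1 + 1 / p) * (1 + 2 ^ (1 + 1 / p)) * C * pnorm p w := by ring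

end Centralizer

/-- every centralizer `Φ` on `ℓ^p` (a homogeneous map
`ℓ^p⁰ → ℓ^p` with `‖Φ(ax) − aΦ(x)‖_p ≤ C ‖a‖_∞ ‖x‖_p`) is quasilinear with
constant at most `M·C`, where `M` depends only on `p`. -/
theorem statement11 (p : ℝ) (hp : 0 < p) :
    ∃ M : ℝ, 0 ≤ M ∧
      ∀ (Φ : (ℕ → ℂ) → (ℕ → ℂ)) (C : ℝ), 0 ≤ C →
        (∀ (c : ℂ) (x : ℕ → ℂ), FinSupp x → Φ (c • x) = c • Φ x) →
        (∀ x : ℕ → ℂ, FinSupp x → Summable fun n => ‖Φ x n‖ ^ p) →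
        (∀ (a x : ℕ → ℂ), FinSupp x → (∃ A : ℝ, ∀ n, ‖a n‖ ≤ A) →
          pnorm p (Φ (a * x) - a * Φ x) ≤ C * (⨆ n, ‖a n‖) * pnorm p x) →
        ∀ x y : ℕ → ℂ, FinSupp x → FinSupp y →
          pnorm p (Φ (x + y) - Φ x - Φ y) ≤ M * C * (pnorm p x + pnorm p y) := by
  set K : ℝ := 2 ^ (1 + 1 / p)
  refine ⟨2 * K * (1 + K) * K, by positivity, ?_⟩
  intro Φ C hC _ hsum hcen x y hx hy
  set w : ℕ → ℂ := fun n => ((‖x n‖ + ‖y n‖ : ℝ) : ℂ)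
  have hnw : ∀ n, ‖w n‖ = ‖x n‖ + ‖y n‖ := fun n => by
    rw [Complex.norm_real, Real.norm_of_nonneg (by positivity)]
  have hxw : ∀ n, ‖x n‖ ≤ ‖w n‖ := fun n =>
    (hnw n).symm ▸ le_add_of_nonneg_right (norm_nonneg _)
  have hyw : ∀ n, ‖y n‖ ≤ ‖w n‖ := fun n =>
    (hnw n).symm ▸ le_add_of_nonneg_left (norm_nonneg _)
  have hw : FinSupp w := hx.of_norm_le_add hy fun n => (hnw n).le
  have hwxy : pnorm p w ≤ K * (pnorm p x + pnorm p y) :=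
    pnorm_le_of_norm_le_add hp (hx.summable_norm_rpow hp) (hy.summable_norm_rpow hp)
      fun n => (hnw n).le
  have hΦ := pnorm_centralizer_add_sub_sub_le hp hC hsum hcen hw
    (norm_div_apply_le_one_of_norm_le hxw) (norm_div_apply_le_one_of_norm_le hyw)
  rw [add_mul, div_mul_cancel_of_norm_le hxw, div_mul_cancel_of_norm_le hyw] at hΦ
  calc pnorm p (Φ (x + y) - Φ x - Φ y) ≤ 2 * K * (1 + K) * C * pnorm p w := hΦ
    _ ≤ 2 * K * (1 + K) * C * (K * (pnorm p x + pnorm p y)) := by gcongr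
    _ = 2 * K * (1 + K) * K * C * (pnorm p x + pnorm p y) := by ring
end

section
/- Let 0 < q < p < ∞ with 1/q = 1/p + 1/s, let Φ be a centralizer on ℓ^p, let a, λ be sequences with a bounded, and suppose ‖λx − aΦ(x)‖_p ≤ K‖x‖_p for all x ∈ ℓ^p⁰. Define Φ_q(x) = u|x|^{q/s}Φ(|x|^{q/p}) where x = u|x| is the polar decomposition. Then ‖λx − aΦ_q(x)‖_q ≤ K‖x‖_q for every finitely supported x ≥ 0 (using x = x^{q/s}·x^{q/p}, ‖x‖_q = ‖x^{q/s}‖_s ‖x^{q/p}‖_p and Hölder's inequality). -/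
noncomputable def rpowSeq (x : ℕ → ℝ) (r : ℝ) : ℕ → ℂ := fun n => ((x n ^ r : ℝ) : ℂ)

lemma aux_add_rpow {p α β : ℝ} (hp : 0 < p) (hα : 0 ≤ α) (hβ : 0 ≤ β) :
    (α + β) ^ p ≤ 2 ^ p * (α ^ p + β ^ p) := by
  have h1 : α + β ≤ 2 * max α β := by
    rcases max_cases α β with ⟨h, h'⟩ | ⟨h, h'⟩ <;> rw [h] <;> linarith
  have h2 : (α + β) ^ p ≤ (2 * max α β) ^ p :=
    Real.rpow_le_rpow (by linarith) h1 hp.le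
  rw [Real.mul_rpow (by norm_num) (le_max_iff.2 (Or.inl hα))] at h2
  refine h2.trans (mul_le_mul_of_nonneg_left ?_ (Real.rpow_nonneg (by norm_num) p))
  rcases max_cases α β with ⟨h, _⟩ | ⟨h, _⟩ <;> rw [h]
  · exact le_add_of_nonneg_right (Real.rpow_nonneg hβ p)
  · exact le_add_of_nonneg_left (Real.rpow_nonneg hα p)

/-- let `0 < q < p < ∞` with `1/q = 1/p + 1/s`, let `Φ` be a
centralizer on `ℓ^p`, `a` bounded, and suppose `‖λx − aΦ(x)‖_p ≤ K‖x‖_p` for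
all finitely supported `x`.  With `Φ_q(x) = u |x|^{q/s} Φ(|x|^{q/p})` (so for
`x ≥ 0`, `Φ_q(x) = x^{q/s} Φ(x^{q/p})`), one has `‖λx − aΦ_q(x)‖_q ≤ K‖x‖_q`
for every finitely supported `x ≥ 0`. -/
theorem statement14 (p q s K C : ℝ)
    (hq : 0 < q) (hqp : q < p) (hs : 0 < s) (hqps : 1 / q = 1 / p + 1 / s)
    (Φ : (ℕ → ℂ) → (ℕ → ℂ))
    (hΦ_hom : ∀ (c : ℂ) (x : ℕ → ℂ), FinSupp x → Φ (c • x) = c • Φ x)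
    (hΦ_mem : ∀ x : ℕ → ℂ, FinSupp x → Summable fun n => ‖Φ x n‖ ^ p)
    (hΦ_cent : ∀ (a x : ℕ → ℂ), FinSupp x → (∃ A : ℝ, ∀ n, ‖a n‖ ≤ A) →
      pnorm p (Φ (a * x) - a * Φ x) ≤ C * (⨆ n, ‖a n‖) * pnorm p x)
    (a lam : ℕ → ℂ) (ha : ∃ A : ℝ, ∀ n, ‖a n‖ ≤ A)
    (hlift : ∀ z : ℕ → ℂ, FinSupp z → pnorm p (lam * z - a * Φ z) ≤ K * pnorm p z) :
    ∀ x : ℕ → ℝ, (∀ n, 0 ≤ x n) → (Function.support x).Finite →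
      pnorm q (lam * (fun n => ((x n : ℝ) : ℂ))
          - a * (rpowSeq x (q / s) * Φ (rpowSeq x (q / p))))
        ≤ K * pnorm q (fun n => ((x n : ℝ) : ℂ)) := by
  intro x hx0 hxfin
  have hp : 0 < p := hq.trans hqp
  have hsq : q < s := by
    by_contra h
    push_neg at h
    have h1 : 1 / q ≤ 1 / s := one_div_le_one_div_of_le hs h
    have h2 : 0 < 1 / p := by positivity
    linarith
  have h1' : q / s + q / p = 1 := by
    field_simp at hqps ⊢
    nlinarith [hqps]
  set S : Finset ℕ := hxfin.toFinset with hS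
  have hmemS : ∀ n, n ∉ S → x n = 0 := by
    intro n hn
    by_contra h
    exact hn (hxfin.mem_toFinset.2 h)
  set y : ℕ → ℂ := rpowSeq x (q / p) with hy
  have hyfin : FinSupp y := by
    apply hxfin.subset
    intro n hn
    simp only [Function.mem_support] at hn ⊢
    intro h
    exact hn (by simp [hy, rpowSeq, h, Real.zero_rpow (by positivity : q / p ≠ 0)])
  set w : ℕ → ℂ := lam * y - a * Φ y with hw
  set T : ℝ := ∑ n ∈ S, x n ^ q with hT
  have hT0 : 0 ≤ T := Finset.sum_nonneg fun n _ => Real.rpow_nonneg (hx0 n) q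
  have hyn : ∀ n, ‖y n‖ = x n ^ (q / p) := fun n => by
    simp [hy, rpowSeq, abs_of_nonneg (Real.rpow_nonneg (hx0 n) _)]
  have hypow : ∀ n, ‖y n‖ ^ p = x n ^ q := by
    intro n
    rw [hyn, ← Real.rpow_mul (hx0 n), div_mul_cancel₀ q hp.ne']
  -- pnorm p y = T ^ (1/p)
  have hpy : pnorm p y = T ^ (1 / p) := by
    unfold pnorm
    congr 1
    rw [tsum_eq_sum (s := S)]
    · exact Finset.sum_congr rfl fun n _ => hypow n
    · intro n hn
      rw [hypow, hmemS n hn, Real.zero_rpow hq.ne']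
  -- pnorm q x = T ^ (1/q)
  have hqx : pnorm q (fun n => ((x n : ℝ) : ℂ)) = T ^ (1 / q) := by
    unfold pnorm
    congr 1
    rw [tsum_eq_sum (s := S)]
    · exact Finset.sum_congr rfl fun n _ => by
        simp [abs_of_nonneg (hx0 n)]
    · intro n hn
      simp [hmemS n hn, Real.zero_rpow hq.ne']
  -- summability of ‖w‖^p
  obtain ⟨A, hA⟩ := ha
  have hA0 : 0 ≤ A := le_trans (norm_nonneg (a 0)) (hA 0)
  have hsum1 : Summable fun n => ‖(lam * y) n‖ ^ p := by
    apply summable_of_finite_support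
    apply hxfin.subset
    intro n hn
    simp only [Function.mem_support] at hn ⊢
    intro hxn
    apply hn
    have hyn0 : y n = 0 := by
      simp [hy, rpowSeq, hxn, Real.zero_rpow (ne_of_gt (div_pos hq hp))]
    simp [Pi.mul_apply, hyn0, Real.zero_rpow hp.ne']
  have hsum2 : Summable fun n => ‖(a * Φ y) n‖ ^ p := by
    refine Summable.of_nonneg_of_le (fun n => Real.rpow_nonneg (norm_nonneg _) p)
      (fun n => ?_) ((hΦ_mem y hyfin).mul_left (A ^ p))
    rw [← Real.mul_rpow hA0 (norm_nonneg _)]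
    exact Real.rpow_le_rpow (norm_nonneg _)
      (by rw [Pi.mul_apply, norm_mul]
          exact mul_le_mul_of_nonneg_right (hA n) (norm_nonneg _)) hp.le
  have hsumw : Summable fun n => ‖w n‖ ^ p := by
    refine Summable.of_nonneg_of_le (fun n => Real.rpow_nonneg (norm_nonneg _) p)
      (fun n => ?_) ((hsum1.add hsum2).mul_left (2 ^ p))
    refine le_trans (Real.rpow_le_rpow (norm_nonneg _) (norm_sub_le _ _) hp.le) ?_
    exact aux_add_rpow hp (norm_nonneg _) (norm_nonneg _)
  -- the lift estimate
  have hWle : pnorm p w ≤ K * T ^ (1 / p) := by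
    rw [← hpy]; exact hlift y hyfin
  -- pointwise identity for the LHS
  have hptwise : ∀ n, (lam * (fun n => ((x n : ℝ) : ℂ))
      - a * (rpowSeq x (q / s) * Φ y)) n = ((x n ^ (q / s) : ℝ) : ℂ) * w n := by
    intro n
    have hxid : ((x n : ℝ) : ℂ) = ((x n ^ (q / s) : ℝ) : ℂ) * ((x n ^ (q / p) : ℝ) : ℂ) := by
      rw [← Complex.ofReal_mul, ← Real.rpow_add' (hx0 n) (by rw [h1']; norm_num),
        h1', Real.rpow_one]
    simp only [Pi.sub_apply, Pi.mul_apply, hw, hy, rpowSeq]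
    rw [hxid]
    ring
  -- LHS norm-power identity
  have hLHSpow : ∀ n, ‖(lam * (fun n => ((x n : ℝ) : ℂ))
      - a * (rpowSeq x (q / s) * Φ y)) n‖ ^ q = (x n ^ (q / s)) ^ q * ‖w n‖ ^ q := by
    intro n
    rw [hptwise n, norm_mul, Complex.norm_real,
      Real.norm_of_nonneg (Real.rpow_nonneg (hx0 n) _),
      Real.mul_rpow (Real.rpow_nonneg (hx0 n) _) (norm_nonneg _)]
  -- Hölder on S
  have hconj : (s / q).HolderConjugate (p / q) := by
    rw [Real.holderConjugate_iff]; constructor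
    · rw [lt_div_iff₀ hq]; linarith
    · rw [inv_div, inv_div]
      rw [div_add_div _ _ hs.ne' hp.ne'] at h1' ⊢
      exact h1'
  set W : ℝ := ∑ n ∈ S, ‖w n‖ ^ p with hWdef
  have hholder : ∑ n ∈ S, (x n ^ (q / s)) ^ q * ‖w n‖ ^ q
      ≤ T ^ (q / s) * W ^ (q / p) := by
    have hH := Real.inner_le_Lp_mul_Lq_of_nonneg S hconj
      (f := fun n => (x n ^ (q / s)) ^ q) (g := fun n => ‖w n‖ ^ q)
      (fun n _ => Real.rpow_nonneg (Real.rpow_nonneg (hx0 n) _) _)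
      (fun n _ => Real.rpow_nonneg (norm_nonneg _) _)
    have e1 : (∑ n ∈ S, ((x n ^ (q / s)) ^ q) ^ (s / q)) ^ (1 / (s / q)) = T ^ (q / s) := by
      rw [one_div_div]
      congr 1
      refine Finset.sum_congr rfl fun n _ => ?_
      rw [← Real.rpow_mul (hx0 n), ← Real.rpow_mul (hx0 n)]
      congr 1
      field_simp
    have e2 : (∑ n ∈ S, (‖w n‖ ^ q) ^ (p / q)) ^ (1 / (p / q)) = W ^ (q / p) := by
      rw [one_div_div]
      congr 1
      refine Finset.sum_congr rfl fun n _ => ?_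
      rw [← Real.rpow_mul (norm_nonneg _)]
      congr 1
      field_simp
    rw [e1, e2] at hH
    exact hH
  -- tsum on the LHS equals the finite sum
  have hLHStsum : (∑' n, ‖(lam * (fun n => ((x n : ℝ) : ℂ))
      - a * (rpowSeq x (q / s) * Φ y)) n‖ ^ q)
      = ∑ n ∈ S, (x n ^ (q / s)) ^ q * ‖w n‖ ^ q := by
    rw [tsum_eq_sum (s := S)]
    · exact Finset.sum_congr rfl fun n _ => hLHSpow n
    · intro n hn
      rw [hLHSpow n, hmemS n hn, Real.zero_rpow (by positivity : q / s ≠ 0),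
        Real.zero_rpow hq.ne', zero_mul]
  -- W ≤ tsum, hence W^{1/p} ≤ pnorm p w
  have hWle2 : W ^ (1 / p) ≤ K * T ^ (1 / p) := by
    refine le_trans ?_ hWle
    unfold pnorm
    apply Real.rpow_le_rpow (Finset.sum_nonneg fun n _ => Real.rpow_nonneg (norm_nonneg _) _)
      ?_ (by positivity)
    exact Summable.sum_le_tsum S (fun n _ => Real.rpow_nonneg (norm_nonneg _) _) hsumw
  have hW0 : 0 ≤ W := Finset.sum_nonneg fun n _ => Real.rpow_nonneg (norm_nonneg _) _
  -- main chain
  rw [hqx]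
  unfold pnorm
  rw [hLHStsum]
  calc (∑ n ∈ S, (x n ^ (q / s)) ^ q * ‖w n‖ ^ q) ^ (1 / q)
      ≤ (T ^ (q / s) * W ^ (q / p)) ^ (1 / q) := by
        apply Real.rpow_le_rpow
          (Finset.sum_nonneg fun n _ => mul_nonneg (Real.rpow_nonneg (Real.rpow_nonneg (hx0 n) _) _)
            (Real.rpow_nonneg (norm_nonneg _) _)) hholder (by positivity)
    _ = T ^ (1 / s) * W ^ (1 / p) := by
        rw [Real.mul_rpow (Real.rpow_nonneg hT0 _) (Real.rpow_nonneg hW0 _),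
          ← Real.rpow_mul hT0, ← Real.rpow_mul hW0]
        congr 2 <;> field_simp <;> ring
    _ ≤ T ^ (1 / s) * (K * T ^ (1 / p)) :=
        mul_le_mul_of_nonneg_left hWle2 (Real.rpow_nonneg hT0 _)
    _ = K * (T ^ (1 / s) * T ^ (1 / p)) := by ring
    _ = K * T ^ (1 / q) := by
        rw [← Real.rpow_add' hT0 (by positivity)]
        congr 1
        rw [hqps]; ring
end

section
/- Let d be a nonincreasing positive null sequence such that d_n · log n → ∞. If λ is any sequence such that ‖λx − Ω(dx)‖₂ ≤ M‖x‖₂ for all x ∈ ℓ²⁰ (where Ω is the Kalton–Peck map), then, since Ω(d e_i) = 0 for each i, λ must be bounded; consequently x ↦ Ω(dx) is bounded on ℓ²⁰, contradicting the computation ‖Ω(d·s_n)‖₂²/‖s_n‖₂² → ∞ with s_n = Σ_{i≤n} d_i^{-1}e_i. Hence no such λ exists, i.e., the multiplication operator d• on ℓ² does not lift through Ω. -/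
open Filter

noncomputable def l2norm (x : ℕ → ℂ) : ℝ := Real.sqrt (∑' n, ‖x n‖ ^ 2)

/-- The Kalton–Peck map `Ω(x) = x · log(‖x‖₂/|x|)` on finitely supported
sequences, with `0` on coordinates where `x` vanishes. -/
noncomputable def KaltonPeck (x : ℕ → ℂ) : ℕ → ℂ := fun k =>
  if x k = 0 then 0 else x k * ((Real.log (l2norm x / ‖x k‖) : ℝ) : ℂ)


lemma l2norm_eq_sum {f : ℕ → ℂ} {s : Finset ℕ} (hf : ∀ k ∉ s, f k = 0) :
    l2norm f = Real.sqrt (∑ k ∈ s, ‖f k‖ ^ 2) := by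
  unfold l2norm
  congr 1
  exact tsum_eq_sum fun k hk => by rw [hf k hk]; simp

lemma l2norm_single (i : ℕ) (c : ℂ) :
    l2norm (fun k => if k = i then c else 0) = ‖c‖ := by
  rw [l2norm_eq_sum (s := {i}) (fun k hk => by simp at hk; simp [hk])]
  simp [Real.sqrt_sq (norm_nonneg c)]

lemma l2norm_eq_norm (s : Finset ℕ) (f : ℕ → ℂ) (hf : ∀ k ∉ s, f k = 0) :
    l2norm f = ‖((WithLp.equiv 2 (∀ _ : ↥s, ℂ)).symm (fun i => f i) : EuclideanSpace ℂ ↥s)‖ := by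
  rw [l2norm_eq_sum hf, EuclideanSpace.norm_eq]
  congr 1
  rw [← Finset.sum_coe_sort s fun k => ‖f k‖ ^ 2]
  simp [WithLp.equiv_symm_apply, PiLp.toLp_apply]

lemma l2norm_sub_le (s : Finset ℕ) (f g : ℕ → ℂ) (hf : ∀ k ∉ s, f k = 0)
    (hg : ∀ k ∉ s, g k = 0) : l2norm (f - g) ≤ l2norm f + l2norm g := by
  rw [l2norm_eq_norm s f hf, l2norm_eq_norm s g hg,
      l2norm_eq_norm s (f - g) (fun k hk => by simp [hf k hk, hg k hk])]
  have := norm_sub_le (E := EuclideanSpace ℂ ↥s) (WithLp.toLp 2 fun i : s => f i)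
    (WithLp.toLp 2 fun i : s => g i)
  rw [← WithLp.toLp_sub] at this
  exact this

lemma l2norm_mul_le (s : Finset ℕ) (lam x : ℕ → ℂ) (M : ℝ) (hM : 0 ≤ M)
    (h : ∀ i, ‖lam i‖ ≤ M) (hx : ∀ k ∉ s, x k = 0) :
    l2norm (lam * x) ≤ M * l2norm x := by
  rw [l2norm_eq_sum (s := s) (fun k hk => by simp [hx k hk]),
      l2norm_eq_sum (s := s) hx,
      ← Real.sqrt_sq hM, ← Real.sqrt_mul (by positivity)]
  apply Real.sqrt_le_sqrt
  rw [Finset.mul_sum]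
  apply Finset.sum_le_sum
  intro i _
  rw [Pi.mul_apply, norm_mul, mul_pow]
  exact mul_le_mul_of_nonneg_right (pow_le_pow_left₀ (norm_nonneg _) (h i) 2) (by positivity)

/-- let `d` be a nonincreasing positive null sequence with
`d_n log n → ∞`.  Then there is no sequence `λ` with
`‖λx − Ω(dx)‖₂ ≤ M ‖x‖₂` for all finitely supported `x`; that is, the
multiplication operator `d•` on `ℓ²` does not lift through `Ω`. -/
theorem statement17 (d : ℕ → ℝ) (hpos : ∀ n, 0 < d n) (hmono : Antitone d)
    (hnull : Tendsto d atTop (nhds 0))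
    (hlog : Tendsto (fun n : ℕ => d n * Real.log n) atTop atTop) :
    ¬ ∃ (lam : ℕ → ℂ) (M : ℝ), ∀ x : ℕ → ℂ, FinSupp x →
        l2norm (lam * x - KaltonPeck (fun k => ((d k : ℝ) : ℂ) * x k))
          ≤ M * l2norm x := by
  rintro ⟨lam, M, hMain⟩

  have hlam : ∀ i, ‖lam i‖ ≤ M := by
    intro i
    set x : ℕ → ℂ := fun k => if k = i then 1 else 0 with hxdef
    have hfs : FinSupp x := (Set.finite_singleton i).subset (by
      intro k hk
      simp only [Function.mem_support, hxdef] at hk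
      by_contra hne
      simp only [Set.mem_singleton_iff] at hne
      exact hk (if_neg hne))
    have hdx : (fun k => ((d k : ℝ) : ℂ) * x k) = fun k => if k = i then ((d i : ℝ) : ℂ) else 0 := by
      funext k
      by_cases h : k = i
      · subst h; simp [hxdef]
      · simp [hxdef, h]
    have hKP : KaltonPeck (fun k => ((d k : ℝ) : ℂ) * x k) = 0 := by
      rw [hdx]
      funext k
      unfold KaltonPeck
      by_cases h : k = i
      · subst h
        have hdne : ((d k : ℝ) : ℂ) ≠ 0 := by
          exact_mod_cast (hpos k).ne'
        have hnorm : ‖((d k : ℝ) : ℂ)‖ = d k := by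
          rw [Complex.norm_real, Real.norm_eq_abs, abs_of_pos (hpos k)]
        simp [l2norm_single, hdne, hnorm, abs_of_pos (hpos k), div_self (hpos k).ne']
      · simp [h]
    have h1 := hMain x hfs
    rw [hKP, sub_zero] at h1
    have hlx : (lam * x) = fun k => if k = i then lam i else 0 := by
      funext k
      by_cases h : k = i
      · subst h; simp [hxdef]
      · simp [hxdef, h]
    rw [hlx, l2norm_single, hxdef, l2norm_single, norm_one, mul_one] at h1
    exact h1
  have hM : 0 ≤ M := le_trans (norm_nonneg _) (hlam 0)
  have key : ∀ n : ℕ, 3 ≤ n →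
      (n : ℝ) * (Real.log n) ^ 2 / 4 ≤ 4 * M ^ 2 * ∑ k ∈ Finset.range n, ((d k)⁻¹) ^ 2 := by
    intro n hn
    set x : ℕ → ℂ := fun k => if k < n then (((d k)⁻¹ : ℝ) : ℂ) else 0 with hxdef
    have hxsupp : ∀ k ∉ Finset.range n, x k = 0 := by
      intro k hk
      rw [Finset.mem_range] at hk
      simp [hxdef, hk]
    have hfs : FinSupp x := (Finset.range n).finite_toSet.subset (by
      intro k hk
      simp only [Function.mem_support] at hk
      by_contra hc
      exact hk (hxsupp k (by simpa using hc)))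
    have hdx : (fun k => ((d k : ℝ) : ℂ) * x k) = fun k => if k < n then (1 : ℂ) else 0 := by
      funext k
      by_cases h : k < n
      · simp only [hxdef, if_pos h]
        rw [← Complex.ofReal_mul, mul_inv_cancel₀ (hpos k).ne', Complex.ofReal_one]
      · simp [hxdef, h]
    have hl2y : l2norm (fun k => if k < n then (1 : ℂ) else 0) = Real.sqrt n := by
      rw [l2norm_eq_sum (s := Finset.range n)
        (fun k hk => by rw [Finset.mem_range] at hk; simp [hk])]
      have he : ∀ k ∈ Finset.range n, ‖if k < n then (1:ℂ) else 0‖ ^ 2 = 1 := fun k hk => by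
        rw [if_pos (Finset.mem_range.mp hk)]; simp
      rw [Finset.sum_congr rfl he]
      simp
    have hKP : KaltonPeck (fun k => ((d k : ℝ) : ℂ) * x k)
        = fun k => if k < n then ((Real.log (Real.sqrt n) : ℝ) : ℂ) else 0 := by
      rw [hdx]
      funext k
      by_cases h : k < n
      · simp only [KaltonPeck, if_pos h, hl2y]
        rw [if_neg one_ne_zero]
        simp
      · simp [KaltonPeck, h]
    have hKPsupp : ∀ k ∉ Finset.range n, KaltonPeck (fun k => ((d k : ℝ) : ℂ) * x k) k = 0 := by
      intro k hk
      rw [Finset.mem_range] at hk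
      rw [hKP]
      simp [hk]
    have hlogsq : Real.log (Real.sqrt n) = Real.log n / 2 := Real.log_sqrt (Nat.cast_nonneg n)
    have hlogn : (0:ℝ) ≤ Real.log n := Real.log_nonneg (by exact_mod_cast Nat.one_le_of_lt hn)
    have hKPl2 : l2norm (KaltonPeck (fun k => ((d k : ℝ) : ℂ) * x k))
        = Real.sqrt n * (Real.log n / 2) := by
      rw [hKP, l2norm_eq_sum (s := Finset.range n)
        (fun k hk => by rw [Finset.mem_range] at hk; simp [hk])]
      have he : ∀ k ∈ Finset.range n,
          ‖if k < n then ((Real.log (Real.sqrt n) : ℝ) : ℂ) else 0‖ ^ 2 = |Real.log (Real.sqrt n)| ^ 2 :=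
        fun k hk => by rw [if_pos (Finset.mem_range.mp hk), Complex.norm_real, Real.norm_eq_abs]
      rw [Finset.sum_congr rfl he, sq_abs]
      rw [Finset.sum_const, Finset.card_range, nsmul_eq_mul, hlogsq,
          Real.sqrt_mul (Nat.cast_nonneg n), Real.sqrt_sq (by positivity)]
    have hl2x : l2norm x = Real.sqrt (∑ k ∈ Finset.range n, ((d k)⁻¹) ^ 2) := by
      rw [l2norm_eq_sum hxsupp]
      congr 1
      refine Finset.sum_congr rfl fun k hk => ?_
      rw [hxdef]
      simp only [if_pos (Finset.mem_range.mp hk)]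
      rw [Complex.norm_real, Real.norm_eq_abs, sq_abs]
    -- triangle
    have h1 := hMain x hfs
    have hbsupp : ∀ k ∉ Finset.range n, (lam * x) k = 0 := fun k hk => by
      simp [hxsupp k hk]
    have husupp : ∀ k ∉ Finset.range n,
        (lam * x - KaltonPeck (fun k => ((d k : ℝ) : ℂ) * x k)) k = 0 := fun k hk => by
      simp [Pi.sub_apply, hbsupp k hk, hKPsupp k hk]
    have heq : KaltonPeck (fun k => ((d k : ℝ) : ℂ) * x k)
        = lam * x - (lam * x - KaltonPeck (fun k => ((d k : ℝ) : ℂ) * x k)) := by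
      funext k; simp
    have htri : l2norm (KaltonPeck (fun k => ((d k : ℝ) : ℂ) * x k))
        ≤ l2norm (lam * x) + l2norm (lam * x - KaltonPeck (fun k => ((d k : ℝ) : ℂ) * x k)) := by
      nth_rewrite 1 [heq]
      exact l2norm_sub_le _ _ _ hbsupp husupp
    have hb : l2norm (lam * x) ≤ M * l2norm x := l2norm_mul_le _ _ _ M hM hlam hxsupp
    have hchain : Real.sqrt n * (Real.log n / 2)
        ≤ 2 * M * Real.sqrt (∑ k ∈ Finset.range n, ((d k)⁻¹) ^ 2) := by
      rw [← hKPl2, ← hl2x] at *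
      calc l2norm (KaltonPeck (fun k => ((d k : ℝ) : ℂ) * x k))
          ≤ l2norm (lam * x) + l2norm (lam * x - KaltonPeck (fun k => ((d k : ℝ) : ℂ) * x k)) := htri
        _ ≤ M * l2norm x + M * l2norm x := add_le_add hb h1
        _ = 2 * M * l2norm x := by ring
    have hL : (0:ℝ) ≤ Real.sqrt n * (Real.log n / 2) := by positivity
    have hsq := pow_le_pow_left₀ hL hchain 2
    have hS : (0:ℝ) ≤ ∑ k ∈ Finset.range n, ((d k)⁻¹) ^ 2 := by positivity
    rw [mul_pow, mul_pow, Real.sq_sqrt (Nat.cast_nonneg n), Real.sq_sqrt hS, mul_pow] at hsq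
    nlinarith [hsq]
  set C : ℝ := Real.sqrt (32 * M ^ 2 + 1) with hCdef
  have hC2 : C ^ 2 = 32 * M ^ 2 + 1 := Real.sq_sqrt (by positivity)
  have hCpos : 0 < C := Real.sqrt_pos.mpr (by positivity)
  obtain ⟨N, hN⟩ := Filter.eventually_atTop.mp (hlog.eventually_ge_atTop C)
  set N2 : ℕ := max N 3 with hN2def
  set S0 : ℝ := ∑ k ∈ Finset.range N2, ((d k)⁻¹) ^ 2 with hS0def
  have hS0 : 0 ≤ S0 := by positivity
  set B : ℝ := 16 * M ^ 2 * S0 * (32 * M ^ 2 + 1) with hBdef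
  set n : ℕ := max N2 (⌈B⌉₊ + 3) with hndef
  have hnN2 : N2 ≤ n := le_max_left _ _
  have hn3 : 3 ≤ n := le_trans (le_max_right N 3) hnN2
  have hnB : B < (n : ℝ) := by
    have h1 : B ≤ (⌈B⌉₊ : ℝ) := Nat.le_ceil B
    have h2 : (⌈B⌉₊ : ℝ) < (⌈B⌉₊ + 3 : ℕ) := by push_cast; linarith
    have h3 : ((⌈B⌉₊ + 3 : ℕ) : ℝ) ≤ n := by exact_mod_cast le_max_right N2 (⌈B⌉₊ + 3)
    linarith
  have hlog1 : (1:ℝ) ≤ Real.log n := by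
    rw [← Real.log_exp 1]
    apply Real.log_le_log (Real.exp_pos 1)
    calc Real.exp 1 ≤ 2.7182818286 := le_of_lt Real.exp_one_lt_d9
      _ ≤ 3 := by norm_num
      _ ≤ (n : ℝ) := by exact_mod_cast hn3
  -- K := n (log n)^2
  set K : ℝ := (n : ℝ) * (Real.log n) ^ 2 with hKdef
  have hKB : B < K := by
    have : (n:ℝ) ≤ K := by
      rw [hKdef]
      nlinarith [mul_nonneg (Nat.cast_nonneg (α := ℝ) n)
        (mul_nonneg (by linarith : (0:ℝ) ≤ Real.log n - 1) (by linarith : (0:ℝ) ≤ Real.log n + 1))]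
    linarith
  -- split the sum
  have hsplit : ∑ k ∈ Finset.range n, ((d k)⁻¹) ^ 2
      = S0 + ∑ k ∈ Finset.Ico N2 n, ((d k)⁻¹) ^ 2 := by
    rw [hS0def]; simp only [Finset.range_eq_Ico]
    exact (Finset.sum_Ico_consecutive _ (Nat.zero_le N2) hnN2).symm
  set T : ℝ := ∑ k ∈ Finset.Ico N2 n, ((d k)⁻¹) ^ 2 with hTdef
  have hT0 : 0 ≤ T := by positivity
  -- bound T
  have hTbound : C ^ 2 * T ≤ K := by
    have hterm : ∀ k ∈ Finset.Ico N2 n, C ^ 2 * ((d k)⁻¹) ^ 2 ≤ (Real.log n) ^ 2 := by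
      intro k hk
      rw [Finset.mem_Ico] at hk
      have hkN : N ≤ k := le_trans (le_max_left N 3) hk.1
      have hk3 : 3 ≤ k := le_trans (le_max_right N 3) hk.1
      have hdk := hpos k
      have hCd : C * (d k)⁻¹ ≤ Real.log k := by
        have h := hN k hkN
        have : C * (d k)⁻¹ ≤ (d k * Real.log k) * (d k)⁻¹ :=
          mul_le_mul_of_nonneg_right h (by positivity)
        rwa [mul_comm (d k) (Real.log k), mul_assoc, mul_inv_cancel₀ hdk.ne', mul_one] at this
      have hlogk0 : (0:ℝ) ≤ Real.log k :=
        Real.log_nonneg (by exact_mod_cast Nat.one_le_of_lt hk3)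
      have hlogkn : Real.log k ≤ Real.log n := by
        apply Real.log_le_log (by exact_mod_cast lt_of_lt_of_le (by norm_num) hk3)
        exact_mod_cast le_of_lt hk.2
      have hCdpos : (0:ℝ) ≤ C * (d k)⁻¹ := by positivity
      calc C ^ 2 * ((d k)⁻¹) ^ 2 = (C * (d k)⁻¹) ^ 2 := by ring
        _ ≤ (Real.log k) ^ 2 := pow_le_pow_left₀ hCdpos hCd 2
        _ ≤ (Real.log n) ^ 2 := pow_le_pow_left₀ hlogk0 hlogkn 2
    calc C ^ 2 * T = ∑ k ∈ Finset.Ico N2 n, C ^ 2 * ((d k)⁻¹) ^ 2 := by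
          rw [hTdef, Finset.mul_sum]
      _ ≤ ∑ _k ∈ Finset.Ico N2 n, (Real.log n) ^ 2 := Finset.sum_le_sum hterm
      _ = ((Finset.Ico N2 n).card : ℝ) * (Real.log n) ^ 2 := by
          rw [Finset.sum_const, nsmul_eq_mul]
      _ ≤ (n : ℝ) * (Real.log n) ^ 2 := by
          apply mul_le_mul_of_nonneg_right _ (by positivity)
          rw [Nat.card_Ico]
          exact_mod_cast Nat.sub_le n N2
      _ = K := rfl
  have hmain := key n hn3
  rw [hsplit] at hmain
  -- hmain : K / 4 ≤ 4 M^2 (S0 + T)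
  have hA : K ≤ 16 * M ^ 2 * S0 + 16 * M ^ 2 * T := by
    rw [hKdef]; nlinarith [hmain]
  rw [hC2] at hTbound
  have hB0 : (0:ℝ) ≤ B := by rw [hBdef]; positivity
  have hK0 : (0:ℝ) ≤ K := le_trans hB0 hKB.le
  nlinarith [mul_le_mul_of_nonneg_left hA (by positivity : (0:ℝ) ≤ 32 * M ^ 2 + 1),
    mul_le_mul_of_nonneg_left hTbound (by positivity : (0:ℝ) ≤ 16 * M ^ 2), hKB, hBdef,
    mul_nonneg (by positivity : (0:ℝ) ≤ 16 * M ^ 2) hK0]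
end

section
/- Let Φ be a centralizer on ℓ², let Φ₁(x) = u|x|^{1/2}Φ(|x|^{1/2}) be the induced centralizer on ℓ¹ (with x = u|x| the polar decomposition), and define φ : ℓ¹⁰ → ℂ by φ(x) = ⟨1_ℕ, Φ₁(x)⟩ = Σ_n Φ₁(x)(n). Then φ is quasilinear: |φ(x+y) − φ(x) − φ(y)| ≤ Q(‖x‖₁ + ‖y‖₁) for some constant Q depending only on the centralizer constant of Φ. -/
/-- The unimodular part `u` in the polar decomposition `x = u|x|`. -/
noncomputable def polarU (x : ℕ → ℂ) : ℕ → ℂ := fun n =>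
  if x n = 0 then 0 else x n / ‖x n‖

/-- The coordinatewise square root `|x|^{1/2}` of the modulus, in `ℂ`. -/
noncomputable def sqrtAbs (x : ℕ → ℂ) : ℕ → ℂ := fun n => ((Real.sqrt ‖x n‖ : ℝ) : ℂ)

/-- `Φ₁(x) = u |x|^{1/2} Φ(|x|^{1/2})`, the centralizer on `ℓ¹` induced by a
centralizer `Φ` on `ℓ²`. -/
noncomputable def Phi1 (Φ : (ℕ → ℂ) → (ℕ → ℂ)) (x : ℕ → ℂ) : ℕ → ℂ := fun n =>
  polarU x n * sqrtAbs x n * Φ (sqrtAbs x) n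

/-- `φ(x) = ⟨1_ℕ, Φ₁(x)⟩ = Σ_n Φ₁(x)(n)`. -/
noncomputable def phiFun (Φ : (ℕ → ℂ) → (ℕ → ℂ)) (x : ℕ → ℂ) : ℂ := ∑' n, Phi1 Φ x n

set_option maxHeartbeats 1000000 in
/-- Key estimate. -/
lemma key_estimate (C : ℝ) (hC : 0 ≤ C) (Φ : (ℕ → ℂ) → (ℕ → ℂ))
    (hΦ2 : ∀ x : ℕ → ℂ, FinSupp x → Summable fun n => ‖Φ x n‖ ^ 2)
    (hcent : ∀ (a x : ℕ → ℂ), FinSupp x → (∃ A : ℝ, ∀ n, ‖a n‖ ≤ A) →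
      Real.sqrt (∑' n, ‖Φ (a * x) n - a n * Φ x n‖ ^ 2)
        ≤ C * (⨆ n, ‖a n‖) * Real.sqrt (∑' n, ‖x n‖ ^ 2))
    (r : ℕ → ℝ) (hr : ∀ n, 0 ≤ r n) (F : Finset ℕ) (hF : ∀ n ∉ F, r n = 0)
    (v : ℕ → ℂ) (hv : ∀ n, ‖v n‖ ≤ r n) :
    ‖(∑ n ∈ F, Phi1 Φ v n) -
        ∑ n ∈ F, (if r n = 0 then 0 else
          v n / (Real.sqrt (r n) : ℂ) * Φ (fun m => ((Real.sqrt (r m) : ℝ) : ℂ)) n)‖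
      ≤ C * ∑ n ∈ F, r n := by
  set w : ℕ → ℂ := fun m => ((Real.sqrt (r m) : ℝ) : ℂ) with hw_def
  set s : ℕ → ℂ := sqrtAbs v with hs_def
  set a : ℕ → ℂ := fun n => if r n = 0 then 0 else ((Real.sqrt ‖v n‖ / Real.sqrt (r n) : ℝ) : ℂ)
    with ha_def
  have hvzero : ∀ n, r n = 0 → v n = 0 := fun n h => by
    have := hv n; rw [h] at this
    exact norm_le_zero_iff.mp this
  -- a * w = s
  have haw : a * w = s := by
    funext n
    by_cases h : r n = 0
    · simp only [Pi.mul_apply, ha_def, hw_def, hs_def, sqrtAbs, if_pos h, zero_mul,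
        hvzero n h, norm_zero, Real.sqrt_zero, Complex.ofReal_zero]
    · have hrpos : 0 < r n := lt_of_le_of_ne (hr n) (Ne.symm h)
      have hsr : Real.sqrt (r n) ≠ 0 := by positivity
      simp only [Pi.mul_apply, ha_def, hw_def, hs_def, sqrtAbs, if_neg h]
      push_cast
      rw [div_mul_cancel₀ _ (Complex.ofReal_ne_zero.mpr hsr)]
  -- ‖a n‖ ≤ 1
  have ha1 : ∀ n, ‖a n‖ ≤ 1 := by
    intro n
    by_cases h : r n = 0
    · simp [ha_def, if_pos h]
    · have hrpos : 0 < r n := lt_of_le_of_ne (hr n) (Ne.symm h)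
      have h1 : Real.sqrt ‖v n‖ / Real.sqrt (r n) ≤ 1 := by
        rw [div_le_one (by positivity)]
        exact Real.sqrt_le_sqrt (hv n)
      have h0 : 0 ≤ Real.sqrt ‖v n‖ / Real.sqrt (r n) := by positivity
      simp only [ha_def, if_neg h, Complex.norm_real]
      rwa [Real.norm_eq_abs, abs_of_nonneg h0]
  -- support facts
  have hwfin : FinSupp w := by
    apply Set.Finite.subset F.finite_toSet
    intro n hn
    simp only [Function.mem_support, hw_def] at hn
    by_contra hnF
    exact hn (by rw [hF n hnF]; simp)
  have hsfin : FinSupp s := by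
    apply Set.Finite.subset F.finite_toSet
    intro n hn
    simp only [Function.mem_support, hs_def, sqrtAbs] at hn
    by_contra hnF
    exact hn (by rw [hvzero n (hF n hnF)]; simp)
  set S : ℝ := ∑ n ∈ F, r n with hS_def
  have hSnonneg : 0 ≤ S := Finset.sum_nonneg fun n _ => hr n
  -- ∑' ‖w n‖^2 = S
  have hw2 : (∑' n, ‖w n‖ ^ 2) = S := by
    rw [tsum_eq_sum (s := F) (fun n hn => by
      simp [hw_def, hF n hn])]
    apply Finset.sum_congr rfl
    intro n _
    simp only [hw_def, Complex.norm_real]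
    rw [Real.norm_eq_abs, abs_of_nonneg (Real.sqrt_nonneg _), Real.sq_sqrt (hr n)]
  -- the error sequence
  set e : ℕ → ℂ := fun n => Φ s n - a n * Φ w n with he_def
  have he2sum : Summable fun n => ‖e n‖ ^ 2 := by
    have hb : Summable (fun n => 2 * ‖Φ s n‖ ^ 2 + 2 * ‖Φ w n‖ ^ 2) :=
      (((hΦ2 s hsfin).mul_left 2)).add ((hΦ2 w hwfin).mul_left 2)
    refine Summable.of_nonneg_of_le (fun n => by positivity) (fun n => ?_) hb
    have h1 : ‖e n‖ ≤ ‖Φ s n‖ + ‖Φ w n‖ := by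
      refine (norm_sub_le _ _).trans ?_
      gcongr
      calc ‖a n * Φ w n‖ = ‖a n‖ * ‖Φ w n‖ := norm_mul _ _
        _ ≤ 1 * ‖Φ w n‖ := by gcongr; exact ha1 n
        _ = ‖Φ w n‖ := one_mul _
    nlinarith [norm_nonneg (e n), norm_nonneg (Φ s n), norm_nonneg (Φ w n),
      sq_nonneg (‖Φ s n‖ - ‖Φ w n‖)]
  have herr : Real.sqrt (∑' n, ‖e n‖ ^ 2) ≤ C * Real.sqrt S := by
    have := hcent a w hwfin ⟨1, ha1⟩
    rw [haw, hw2] at this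
    refine this.trans ?_
    have hsup : (⨆ n, ‖a n‖) ≤ 1 := ciSup_le ha1
    calc C * (⨆ n, ‖a n‖) * Real.sqrt S ≤ C * 1 * Real.sqrt S := by
          apply mul_le_mul_of_nonneg_right _ (Real.sqrt_nonneg _)
          exact mul_le_mul_of_nonneg_left hsup hC
      _ = C * Real.sqrt S := by ring
  -- pointwise identity: Phi1 Φ v n - M n = polarU v n * s n * e n
  have hpoint : ∀ n, Phi1 Φ v n -
      (if r n = 0 then 0 else v n / (Real.sqrt (r n) : ℂ) * Φ w n)
      = polarU v n * s n * e n := by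
    intro n
    by_cases h : r n = 0
    · have hv0 : v n = 0 := hvzero n h
      simp only [if_pos h, Phi1, polarU, hs_def, he_def, hv0, if_pos]
      simp
    · simp only [if_neg h, Phi1, he_def, hs_def]
      have hkey : polarU v n * sqrtAbs v n * a n = v n / (Real.sqrt (r n) : ℂ) := by
        by_cases hv0 : v n = 0
        · simp [polarU, hv0]
        · have hnv : (‖v n‖ : ℂ) ≠ 0 :=
            Complex.ofReal_ne_zero.mpr (norm_ne_zero_iff.mpr hv0)
          have hss : (Real.sqrt ‖v n‖ : ℂ) * (Real.sqrt ‖v n‖ : ℂ) = (‖v n‖ : ℂ) := by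
            rw [← Complex.ofReal_mul, Real.mul_self_sqrt (norm_nonneg _)]
          have hsr : (Real.sqrt (r n) : ℂ) ≠ 0 := by
            have hrpos : 0 < r n := lt_of_le_of_ne (hr n) (Ne.symm h)
            simp [Real.sqrt_ne_zero'.mpr hrpos]
          simp only [polarU, sqrtAbs, ha_def, if_neg hv0, if_neg h]
          push_cast
          calc v n / (‖v n‖ : ℂ) * (Real.sqrt ‖v n‖ : ℂ)
                * ((Real.sqrt ‖v n‖ : ℂ) / (Real.sqrt (r n) : ℂ))
              = v n * ((Real.sqrt ‖v n‖ : ℂ) * (Real.sqrt ‖v n‖ : ℂ))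
                / ((‖v n‖ : ℂ) * (Real.sqrt (r n) : ℂ)) := by ring
            _ = (‖v n‖ : ℂ) * v n / ((‖v n‖ : ℂ) * (Real.sqrt (r n) : ℂ)) := by
                rw [hss, mul_comm (v n) ((‖v n‖ : ℂ))]
            _ = v n / (Real.sqrt (r n) : ℂ) := mul_div_mul_left _ _ hnv
      calc polarU v n * sqrtAbs v n * Φ (sqrtAbs v) n -
            v n / (Real.sqrt (r n) : ℂ) * Φ w n
          = polarU v n * sqrtAbs v n * Φ (sqrtAbs v) n -
            (polarU v n * sqrtAbs v n * a n) * Φ w n := by rw [hkey]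
        _ = polarU v n * sqrtAbs v n * (Φ (sqrtAbs v) n - a n * Φ w n) := by ring
  -- now estimate
  rw [← Finset.sum_sub_distrib]
  calc ‖∑ n ∈ F, (Phi1 Φ v n -
        (if r n = 0 then 0 else v n / (Real.sqrt (r n) : ℂ) * Φ w n))‖
      ≤ ∑ n ∈ F, ‖polarU v n * s n * e n‖ := by
        rw [show (∑ n ∈ F, (Phi1 Φ v n -
          (if r n = 0 then 0 else v n / (Real.sqrt (r n) : ℂ) * Φ w n)))
          = ∑ n ∈ F, polarU v n * s n * e n from Finset.sum_congr rfl fun n _ => hpoint n]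
        exact norm_sum_le _ _
    _ ≤ ∑ n ∈ F, ‖polarU v n * s n‖ * ‖e n‖ := by
        apply Finset.sum_le_sum; intro n _; rw [norm_mul]
    _ ≤ Real.sqrt (∑ n ∈ F, ‖polarU v n * s n‖ ^ 2) * Real.sqrt (∑ n ∈ F, ‖e n‖ ^ 2) := by
        rw [← Real.sqrt_mul (Finset.sum_nonneg fun n _ => by positivity)]
        rw [show (∑ n ∈ F, ‖polarU v n * s n‖ * ‖e n‖)
          = Real.sqrt ((∑ n ∈ F, ‖polarU v n * s n‖ * ‖e n‖) ^ 2) from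
            (Real.sqrt_sq (Finset.sum_nonneg fun n _ => by positivity)).symm]
        exact Real.sqrt_le_sqrt (Finset.sum_mul_sq_le_sq_mul_sq F _ _)
    _ ≤ Real.sqrt S * (C * Real.sqrt S) := by
        apply mul_le_mul
        · apply Real.sqrt_le_sqrt
          apply Finset.sum_le_sum
          intro n _
          have hu : ‖polarU v n‖ ≤ 1 := by
            by_cases hv0 : v n = 0
            · simp [polarU, hv0]
            · simp only [polarU, if_neg hv0]
              rw [norm_div, Complex.norm_real, Real.norm_eq_abs,
                abs_of_nonneg (norm_nonneg _), div_self (norm_ne_zero_iff.mpr hv0)]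
          have hsn : ‖s n‖ ^ 2 = ‖v n‖ := by
            simp only [hs_def, sqrtAbs, Complex.norm_real]
            rw [Real.norm_eq_abs, abs_of_nonneg (Real.sqrt_nonneg _), Real.sq_sqrt (norm_nonneg _)]
          calc ‖polarU v n * s n‖ ^ 2 = ‖polarU v n‖ ^ 2 * ‖s n‖ ^ 2 := by
                rw [norm_mul, mul_pow]
            _ ≤ 1 * ‖v n‖ := by
                rw [hsn]
                have h2 : ‖polarU v n‖ ^ 2 ≤ 1 := by nlinarith [norm_nonneg (polarU v n)]
                exact mul_le_mul_of_nonneg_right h2 (norm_nonneg _)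
            _ ≤ r n := by rw [one_mul]; exact hv n
        · refine le_trans ?_ herr
          apply Real.sqrt_le_sqrt
          exact Summable.sum_le_tsum F (fun n _ => by positivity) he2sum
        · exact Real.sqrt_nonneg _
        · exact Real.sqrt_nonneg _
    _ = C * S := by
        rw [← mul_assoc, mul_comm (Real.sqrt S) C, mul_assoc,
          Real.mul_self_sqrt hSnonneg]

/-- for a centralizer `Φ` on `ℓ²` with centralizer constant `C`,
the scalar map `φ(x) = Σ_n Φ₁(x)(n)` on `ℓ¹⁰` is quasilinear:
`|φ(x+y) − φ(x) − φ(y)| ≤ Q (‖x‖₁ + ‖y‖₁)` with `Q` depending only on `C`. -/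
theorem statement19 (C : ℝ) (hC : 0 ≤ C) :
    ∃ Q : ℝ, 0 ≤ Q ∧
      ∀ Φ : (ℕ → ℂ) → (ℕ → ℂ),
        (∀ (c : ℂ) (x : ℕ → ℂ), FinSupp x → Φ (c • x) = c • Φ x) →
        (∀ x : ℕ → ℂ, FinSupp x → Summable fun n => ‖Φ x n‖ ^ 2) →
        (∀ (a x : ℕ → ℂ), FinSupp x → (∃ A : ℝ, ∀ n, ‖a n‖ ≤ A) →
          Real.sqrt (∑' n, ‖Φ (a * x) n - a n * Φ x n‖ ^ 2)
            ≤ C * (⨆ n, ‖a n‖) * Real.sqrt (∑' n, ‖x n‖ ^ 2)) →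
        ∀ x y : ℕ → ℂ, FinSupp x → FinSupp y →
          ‖phiFun Φ (x + y) - phiFun Φ x - phiFun Φ y‖
            ≤ Q * ((∑' n, ‖x n‖) + ∑' n, ‖y n‖) := by
  refine ⟨3 * C, by positivity, ?_⟩
  intro Φ _hhom hΦ2 hcent x y hx hy
  set r : ℕ → ℝ := fun n => ‖x n‖ + ‖y n‖ with hr_def
  have hr : ∀ n, 0 ≤ r n := fun n => by positivity
  set F : Finset ℕ := hx.toFinset ∪ hy.toFinset with hF_def
  have hF : ∀ n ∉ F, r n = 0 := by
    intro n hn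
    simp only [hF_def, Finset.mem_union, Set.Finite.mem_toFinset, Function.mem_support,
      not_or, not_not] at hn
    have h1 : x n = 0 := by
      by_contra h; exact hn.1 ((Set.Finite.mem_toFinset hx).mpr h)
    have h2 : y n = 0 := by
      by_contra h; exact hn.2 ((Set.Finite.mem_toFinset hy).mpr h)
    simp [hr_def, h1, h2]
  have hFx : ∀ n ∉ F, x n = 0 := by
    intro n hn
    have := hF n hn
    simp only [hr_def] at this
    have : ‖x n‖ = 0 := by nlinarith [norm_nonneg (x n), norm_nonneg (y n)]
    exact norm_eq_zero.mp this
  have hFy : ∀ n ∉ F, y n = 0 := by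
    intro n hn
    have := hF n hn
    simp only [hr_def] at this
    have : ‖y n‖ = 0 := by nlinarith [norm_nonneg (x n), norm_nonneg (y n)]
    exact norm_eq_zero.mp this
  -- phiFun equals finite sum over F
  have hphi : ∀ v : ℕ → ℂ, (∀ n ∉ F, v n = 0) → phiFun Φ v = ∑ n ∈ F, Phi1 Φ v n := by
    intro v hvF
    apply tsum_eq_sum
    intro n hn
    simp [Phi1, polarU, hvF n hn]
  -- key applications
  have keyx := key_estimate C hC Φ hΦ2 hcent r hr F hF x
    (fun n => by simp only [hr_def]; nlinarith [norm_nonneg (y n)])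
  have keyy := key_estimate C hC Φ hΦ2 hcent r hr F hF y
    (fun n => by simp only [hr_def]; nlinarith [norm_nonneg (x n)])
  have keyz := key_estimate C hC Φ hΦ2 hcent r hr F hF (x + y)
    (fun n => by simp only [hr_def, Pi.add_apply]; exact norm_add_le _ _)
  set w : ℕ → ℂ := fun m => ((Real.sqrt (r m) : ℝ) : ℂ) with hw_def
  set M : (ℕ → ℂ) → ℕ → ℂ := fun v n => if r n = 0 then 0 else
    v n / (Real.sqrt (r n) : ℂ) * Φ w n with hM_def
  -- main terms cancel
  have hMadd : ∀ n, M (x + y) n = M x n + M y n := by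
    intro n
    by_cases h : r n = 0
    · simp [hM_def, if_pos h]
    · simp only [hM_def, if_neg h, Pi.add_apply]
      ring
  have hS : (∑ n ∈ F, r n) = (∑' n, ‖x n‖) + ∑' n, ‖y n‖ := by
    rw [tsum_eq_sum (s := F) (f := fun n => ‖x n‖) (fun n hn => by simp [hFx n hn]),
      tsum_eq_sum (s := F) (f := fun n => ‖y n‖) (fun n hn => by simp [hFy n hn]),
      ← Finset.sum_add_distrib]
  rw [hphi x hFx, hphi y hFy, hphi (x + y) (fun n hn => by simp [hFx n hn, hFy n hn])]
  have hdecomp : (∑ n ∈ F, Phi1 Φ (x + y) n) - (∑ n ∈ F, Phi1 Φ x n) - ∑ n ∈ F, Phi1 Φ y n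
      = ((∑ n ∈ F, Phi1 Φ (x + y) n) - ∑ n ∈ F, M (x + y) n)
        - ((∑ n ∈ F, Phi1 Φ x n) - ∑ n ∈ F, M x n)
        - ((∑ n ∈ F, Phi1 Φ y n) - ∑ n ∈ F, M y n) := by
    have : (∑ n ∈ F, M (x + y) n) = (∑ n ∈ F, M x n) + ∑ n ∈ F, M y n := by
      rw [← Finset.sum_add_distrib]
      exact Finset.sum_congr rfl fun n _ => hMadd n
    rw [this]; ring
  rw [hdecomp, ← hS]
  calc ‖((∑ n ∈ F, Phi1 Φ (x + y) n) - ∑ n ∈ F, M (x + y) n)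
        - ((∑ n ∈ F, Phi1 Φ x n) - ∑ n ∈ F, M x n)
        - ((∑ n ∈ F, Phi1 Φ y n) - ∑ n ∈ F, M y n)‖
      ≤ ‖((∑ n ∈ F, Phi1 Φ (x + y) n) - ∑ n ∈ F, M (x + y) n)
        - ((∑ n ∈ F, Phi1 Φ x n) - ∑ n ∈ F, M x n)‖
        + ‖(∑ n ∈ F, Phi1 Φ y n) - ∑ n ∈ F, M y n‖ := norm_sub_le _ _
    _ ≤ ‖(∑ n ∈ F, Phi1 Φ (x + y) n) - ∑ n ∈ F, M (x + y) n‖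
        + ‖(∑ n ∈ F, Phi1 Φ x n) - ∑ n ∈ F, M x n‖
        + ‖(∑ n ∈ F, Phi1 Φ y n) - ∑ n ∈ F, M y n‖ := by
        gcongr; exact norm_sub_le _ _
    _ ≤ C * (∑ n ∈ F, r n) + C * (∑ n ∈ F, r n) + C * (∑ n ∈ F, r n) := by
        gcongr ?_ + ?_ + ?_
    _ = 3 * C * (∑ n ∈ F, r n) := by ring
end
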